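/- arXiv:2010.02206 — 4 statements merged into one kernel-verified Lean document; each statement's English description precedes it below -/
import Mathlib

section
/- Let 0 < p < q < 1 with q = p^α for some 0 < α < 1, let a, b be complex numbers with a ≠ 0, and let z be a complex number with Re z > 0. Then the function f(ζ) = (b q^ζ, a q^{-ζ}; p)_∞ / ((-z q^ζ, -q^{1-ζ}/z; q)_∞) satisfies the bound: there exist constants C > 0 and ζ_0 such that for all ζ ≥ ζ_0, |f(ζ)| ≤ C · (|z| |a|^α / q)^ζ · q^{(1-α) ζ² / 2}. -/
open Complex Finset

variable {M : Type*} [CommMonoid M] [TopologicalSpace M] [ContinuousMul M]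

lemma tail_hasProd {f : ℕ → M} {n : ℕ} {P : M} (h : HasProd (fun k ↦ f (k + n)) P) :
    HasProd (f ∘ (↑) : ((↑(range n) : Set ℕ)ᶜ : Set ℕ) → M) P := by
  have h2' : HasProd ((f ∘ (↑)) ∘ (notMemRangeEquiv n).symm) P := by
    have he : (((f ∘ (↑)) ∘ (notMemRangeEquiv n).symm) : ℕ → M)
        = fun k ↦ f (k + n) := by
      funext k; simp [add_comm]
    rw [he]; exact h
  exact ((notMemRangeEquiv n).symm.hasProd_iff).mp h2'

lemma mult_of_tail {f : ℕ → M} (n : ℕ) (h : Multipliable fun k ↦ f (k + n)) :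
    Multipliable f :=
  Multipliable.mul_compl ((range n).hasProd f).multipliable (tail_hasProd h.hasProd).multipliable

lemma split_tprod [T2Space M] (f : ℕ → M) (n : ℕ) (h : Multipliable fun k ↦ f (k + n)) :
    ∏' k, f k = (∏ k ∈ range n, f k) * ∏' k, f (k + n) :=
  (HasProd.mul_compl ((range n).hasProd f) (tail_hasProd h.hasProd)).tprod_eq

lemma mult_c (c : ℂ) {r : ℝ} (hr0 : 0 < r) (hr1 : r < 1) :
    Multipliable fun k : ℕ ↦ (1 - c * (r : ℂ) ^ k) := by
  obtain ⟨N, hN⟩ : ∃ N : ℕ, ‖c‖ * r ^ N ≤ 1/2 := by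
    have h := tendsto_pow_atTop_nhds_zero_of_lt_one hr0.le hr1
    have h2 := h.const_mul (‖c‖)
    rw [mul_zero] at h2
    exact (h2.eventually_le_const (by norm_num : (0:ℝ) < 1/2)).exists
  apply mult_of_tail N
  have key : ∀ k : ℕ, ‖c * (r:ℂ) ^ (k + N)‖ ≤ 1/2 := by
    intro k
    rw [norm_mul, norm_pow, Complex.norm_real, Real.norm_eq_abs, abs_of_pos hr0, pow_add]
    have hk1 : r ^ k ≤ 1 := pow_le_one₀ hr0.le hr1.le
    nlinarith [norm_nonneg c, pow_nonneg hr0.le N, pow_nonneg hr0.le k,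
      mul_nonneg (norm_nonneg c) (pow_nonneg hr0.le N)]
  have hne : ∀ k : ℕ, (1 : ℂ) - c * (r:ℂ) ^ (k + N) ≠ 0 := by
    intro k h
    have h1 : c * (r:ℂ) ^ (k+N) = 1 := by linear_combination -h
    have : ‖c * (r:ℂ) ^ (k+N)‖ = 1 := by rw [h1]; simp
    linarith [key k]
  have hsum : Summable fun k : ℕ ↦ Complex.log (1 - c * (r:ℂ) ^ (k + N)) := by
    refine Summable.of_norm_bounded (g := fun k : ℕ ↦ (3/2) * (‖c‖ * r ^ N) * r ^ k) ?_ ?_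
    · exact (summable_geometric_of_lt_one hr0.le hr1).mul_left _
    · intro k
      have h1 : ‖-(c * (r:ℂ) ^ (k+N))‖ ≤ 1/2 := by rw [norm_neg]; exact key k
      have h2 := Complex.norm_log_one_add_half_le_self h1
      rw [show (1:ℂ) + -(c * (r:ℂ)^(k+N)) = 1 - c * (r:ℂ)^(k+N) by ring] at h2
      refine h2.trans ?_
      rw [norm_neg, norm_mul, norm_pow, Complex.norm_real, Real.norm_eq_abs,
        abs_of_pos hr0, pow_add]
      ring_nf
      nlinarith [norm_nonneg c, pow_nonneg hr0.le k, pow_nonneg hr0.le N,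
        pow_pos hr0 k, pow_pos hr0 N]
  exact Complex.multipliable_of_summable_log hsum

lemma multR (d : ℝ) (hd : 0 ≤ d) {r : ℝ} (hr0 : 0 < r) (hr1 : r < 1) :
    Multipliable fun k : ℕ ↦ (1 + d * r ^ k) := by
  have hpos : ∀ (_ : Unit) (k : ℕ), 0 < 1 + d * r ^ k := by
    intro _ k
    have : 0 ≤ d * r ^ k := mul_nonneg hd (pow_nonneg hr0.le k)
    linarith
  have hsum : Summable fun k : ℕ ↦ Real.log (1 + d * r ^ k) := by
    refine Summable.of_norm_bounded (g := fun k : ℕ ↦ d * r ^ k) ?_ ?_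
    · exact (summable_geometric_of_lt_one hr0.le hr1).mul_left _
    · intro k
      have h0 : 0 ≤ d * r ^ k := mul_nonneg hd (pow_nonneg hr0.le k)
      rw [Real.norm_eq_abs, _root_.abs_of_nonneg (Real.log_nonneg (by linarith))]
      have := Real.log_le_sub_one_of_pos (hpos () k)
      linarith
  exact Real.multipliable_of_summable_log (hpos ()) hsum

lemma abs_one_add_ge {w : ℂ} (hw : 0 ≤ w.re) :
    1 ≤ ‖1 + w‖ ∧ ‖w‖ ≤ ‖1 + w‖ := by
  constructor
  · rw [show (1:ℝ) = Real.sqrt 1 by simp, Complex.norm_def, Complex.normSq_apply]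
    apply Real.sqrt_le_sqrt
    simp only [Complex.add_re, Complex.one_re, Complex.add_im, Complex.one_im]
    nlinarith [sq_nonneg w.im, sq_nonneg w.re]
  · rw [Complex.norm_def, Complex.norm_def]
    apply Real.sqrt_le_sqrt
    simp only [Complex.normSq_apply, Complex.add_re, Complex.one_re, Complex.add_im,
      Complex.one_im]
    nlinarith

section RealTprod

lemma hasProd_le_real {f g : ℕ → ℝ} (h0 : ∀ i, 0 ≤ f i) (h : ∀ i, f i ≤ g i) {x y : ℝ}
    (hf : HasProd f x) (hg : HasProd g y) : x ≤ y :=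
  le_of_tendsto_of_tendsto' hf hg fun s ↦
    Finset.prod_le_prod (fun i _ ↦ h0 i) (fun i _ ↦ h i)

lemma tprod_le_tprod_real {f g : ℕ → ℝ} (h0 : ∀ i, 0 ≤ f i) (h : ∀ i, f i ≤ g i)
    (hf : Multipliable f) (hg : Multipliable g) : ∏' i, f i ≤ ∏' i, g i :=
  hasProd_le_real h0 h hf.hasProd hg.hasProd

lemma one_le_prod_real {f : ℕ → ℝ} (s : Finset ℕ) (h : ∀ i, 1 ≤ f i) :
    1 ≤ ∏ i ∈ s, f i := by
  have := Finset.prod_le_prod (f := fun _ : ℕ ↦ (1:ℝ)) (g := f)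
    (s := s) (fun i _ ↦ zero_le_one) (fun i _ ↦ h i)
  simpa using this

lemma prod_le_tprod_real {f : ℕ → ℝ} (s : Finset ℕ) (h0 : ∀ i, 0 ≤ f i)
    (hs : ∀ i, i ∉ s → 1 ≤ f i) (hf : Multipliable f) : ∏ i ∈ s, f i ≤ ∏' i, f i := by
  refine ge_of_tendsto hf.hasProd ?_
  filter_upwards [Filter.eventually_ge_atTop s] with t hst
  have : ∏ i ∈ t, f i = (∏ i ∈ t \ s, f i) * ∏ i ∈ s, f i := (Finset.prod_sdiff hst).symm
  rw [this]
  have h1 : 1 ≤ ∏ i ∈ t \ s, f i := by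
    have := Finset.prod_le_prod (f := fun _ : ℕ ↦ (1:ℝ)) (g := f)
      (s := t \ s) (fun i _ ↦ zero_le_one) (fun i hi ↦ hs i (Finset.mem_sdiff.mp hi).2)
    simpa using this
  have h2 : 0 ≤ ∏ i ∈ s, f i := Finset.prod_nonneg fun i _ ↦ h0 i
  nlinarith

lemma one_le_tprod_real {f : ℕ → ℝ} (h : ∀ i, 1 ≤ f i) (hf : Multipliable f) :
    1 ≤ ∏' i, f i := by
  refine ge_of_tendsto' hf.hasProd fun s ↦ ?_
  exact one_le_prod_real s h

lemma tprod_nonneg_real {f : ℕ → ℝ} (h : ∀ i, 0 ≤ f i) (hf : Multipliable f) :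
    0 ≤ ∏' i, f i :=
  ge_of_tendsto' hf.hasProd fun s ↦ Finset.prod_nonneg fun i _ ↦ h i

end RealTprod

lemma one_le_multR (d : ℝ) (hd : 0 ≤ d) {r : ℝ} (hr0 : 0 < r) (hr1 : r < 1) :
    1 ≤ ∏' k : ℕ, (1 + d * r ^ k) := by
  have h : ∀ k : ℕ, (1:ℝ) ≤ 1 + d * r ^ k := by
    intro k
    nlinarith [pow_nonneg hr0.le k, mul_nonneg hd (pow_nonneg hr0.le k)]
  exact one_le_tprod_real h (multR d hd hr0 hr1)

lemma upper2 (a : ℂ) (ha : a ≠ 0) {r : ℝ} (hr0 : 0 < r) (hr1 : r < 1) (s : ℝ) (hs : 0 ≤ s) :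
    (∏' k : ℕ, ‖1 - a * ((r ^ (-s) : ℝ) : ℂ) * (r : ℂ) ^ k‖)
      ≤ ((∏' k : ℕ, (1 + ‖a‖ * r ^ k)) * (∏' k : ℕ, (1 + (‖a‖)⁻¹ * r ^ k))
          * max 1 (‖a‖) * r ^ (-(8:ℝ)⁻¹)) * ‖a‖ ^ s
          * r ^ (-s^2/2 - s/2) := by
  set A := ‖a‖ with hA
  have hA0 : 0 < A := norm_pos_iff.mpr ha
  set c : ℂ := a * ((r ^ (-s) : ℝ) : ℂ) with hc
  have habsc : ‖c‖ = A * r ^ (-s) := by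
    rw [hc, norm_mul, Complex.norm_real, Real.norm_eq_abs, abs_of_pos (Real.rpow_pos_of_pos hr0 _)]
  set n := ⌈s⌉₊ with hn
  have hsn : s ≤ (n : ℝ) := Nat.le_ceil s
  have hns : (n : ℝ) < s + 1 := Nat.ceil_lt_add_one hs
  set f : ℕ → ℝ := fun k ↦ ‖1 - c * (r : ℂ) ^ k‖ with hf
  clear_value f
  have hfabs : ∀ k : ℕ, f k ≤ 1 + (A * r ^ (-s)) * r ^ (k : ℕ) := by
    intro k
    rw [hf]
    calc ‖1 - c * (r:ℂ) ^ k‖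
        ≤ ‖1‖ + ‖c * (r:ℂ) ^ k‖ := norm_sub_le _ _
      _ = 1 + (A * r ^ (-s)) * r ^ k := by
          rw [norm_one, norm_mul, habsc, norm_pow, Complex.norm_real, Real.norm_eq_abs, abs_of_pos hr0]
  have htail : Multipliable fun k : ℕ ↦ f (k + n) := by
    have he : (fun k : ℕ ↦ f (k + n))
        = fun k : ℕ ↦ ‖1 - (c * (r:ℂ)^n) * (r:ℂ)^k‖ := by
      funext k; rw [hf]; simp only [pow_add]; congr 2; ring
    rw [he]
    exact (mult_c _ hr0 hr1).norm
  rw [split_tprod f n htail]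
  -- tail bound
  have tail_le : (∏' k, f (k + n)) ≤ ∏' k : ℕ, (1 + A * r ^ k) := by
    apply tprod_le_tprod_real (fun k ↦ by rw [hf]; exact norm_nonneg _) _ htail (multR A hA0.le hr0 hr1)
    intro k
    refine (hfabs (k + n)).trans ?_
    gcongr 1 + ?_
    rw [mul_assoc, ← Real.rpow_natCast r (k+n), ← Real.rpow_add hr0,
      ← Real.rpow_natCast r k]
    gcongr A * ?_
    apply Real.rpow_le_rpow_of_exponent_ge hr0 hr1.le
    push_cast; linarith
  -- head bound
  have head_le : (∏ k ∈ Finset.range n, f k)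
      ≤ A ^ n * r ^ ((n : ℝ) * (n - 1) / 2 - n * s)
          * ∏' k : ℕ, (1 + A⁻¹ * r ^ k) := by
    have step1 : (∏ k ∈ Finset.range n, f k)
        ≤ ∏ k ∈ Finset.range n, (A * r ^ ((k : ℝ) - s)) * (1 + A⁻¹ * r ^ (n - 1 - k)) := by
      apply Finset.prod_le_prod
      · intro k _; rw [hf]; exact norm_nonneg _
      · intro k hk
        rw [Finset.mem_range] at hk
        have hk1 : (k : ℝ) ≤ (n : ℝ) - 1 := by
          have : (k : ℝ) + 1 ≤ n := by exact_mod_cast hk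
          linarith
        refine (hfabs k).trans ?_
        have hexp : (A * r ^ ((k:ℝ) - s)) * (1 + A⁻¹ * r ^ (n - 1 - k))
            = A * r ^ ((k:ℝ) - s) + r ^ ((k:ℝ) - s) * r ^ ((n - 1 - k : ℕ) : ℕ) := by
          field_simp
        rw [hexp]
        have h1 : (A * r ^ (-s)) * r ^ (k : ℕ) = A * r ^ ((k:ℝ) - s) := by
          rw [mul_assoc, ← Real.rpow_natCast r k, ← Real.rpow_add hr0]
          ring_nf
        rw [h1]
        have hE : ((n - 1 - k : ℕ) : ℝ) = (n : ℝ) - 1 - k := by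
          have hkn : k ≤ n - 1 := by omega
          have hn1 : 1 ≤ n := by omega
          push_cast [Nat.cast_sub hkn, Nat.cast_sub hn1]
          ring
        have h3 : (1:ℝ) ≤ r ^ ((k:ℝ) - s) * r ^ (n - 1 - k) := by
          rw [← Real.rpow_natCast r (n - 1 - k), hE, ← Real.rpow_add hr0]
          calc (1:ℝ) = r ^ (0:ℝ) := (Real.rpow_zero r).symm
            _ ≤ r ^ ((k:ℝ) - s + ((n:ℝ) - 1 - k)) :=
              Real.rpow_le_rpow_of_exponent_ge hr0 hr1.le (by linarith)
        linarith
    refine step1.trans ?_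
    rw [Finset.prod_mul_distrib, Finset.prod_mul_distrib]
    have e1 : (∏ _k ∈ Finset.range n, A) = A ^ n := by
      rw [Finset.prod_const, Finset.card_range]
    have e2 : (∏ k ∈ Finset.range n, r ^ ((k : ℝ) - s)) = r ^ ((n:ℝ) * (n - 1) / 2 - n * s) := by
      rw [← Real.rpow_sum_of_pos hr0]
      congr 1
      rw [Finset.sum_sub_distrib, Finset.sum_const, Finset.card_range]
      have : (∑ k ∈ Finset.range n, (k : ℝ)) = (n : ℝ) * (n - 1) / 2 := by
        induction n with
        | zero => simp
        | succ m ih => rw [Finset.sum_range_succ, ih]; push_cast; ring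
      rw [this]; ring
    have e3 : (∏ k ∈ Finset.range n, (1 + A⁻¹ * r ^ (n - 1 - k)))
        ≤ ∏' k : ℕ, (1 + A⁻¹ * r ^ k) := by
      rw [Finset.prod_range_reflect (fun j ↦ 1 + A⁻¹ * r ^ j) n]
      apply prod_le_tprod_real
      · intro k
        have := mul_nonneg (inv_nonneg.mpr hA0.le) (pow_nonneg hr0.le k)
        nlinarith
      · intro k _
        nlinarith [pow_nonneg hr0.le k, mul_nonneg (inv_nonneg.mpr hA0.le) (pow_nonneg hr0.le k)]
      · exact multR _ (inv_nonneg.mpr hA0.le) hr0 hr1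
    rw [e1, e2]
    exact mul_le_mul_of_nonneg_left e3 (by positivity)
  -- combine
  have hheadpos : (0:ℝ) ≤ ∏ k ∈ Finset.range n, f k :=
    Finset.prod_nonneg fun k _ ↦ by rw [hf]; exact norm_nonneg _
  have htailpos : (0:ℝ) ≤ ∏' k, f (k + n) :=
    tprod_nonneg_real (fun k ↦ by rw [hf]; exact norm_nonneg _) htail
  have hCA : (1:ℝ) ≤ ∏' k : ℕ, (1 + A * r ^ k) := one_le_multR _ hA0.le hr0 hr1
  have hDA : (1:ℝ) ≤ ∏' k : ℕ, (1 + A⁻¹ * r ^ k) :=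
    one_le_multR _ (inv_nonneg.mpr hA0.le) hr0 hr1
  have core : A ^ n * r ^ ((n : ℝ) * (n - 1) / 2 - n * s)
      ≤ (A ^ s * max 1 A) * (r ^ (-(8:ℝ)⁻¹) * r ^ (-s^2/2 - s/2)) := by
    apply mul_le_mul _ _ (Real.rpow_nonneg hr0.le _) (by positivity)
    · -- A ^ n ≤ A ^ s * max 1 A
      rw [← Real.rpow_natCast A n,
        show (n : ℝ) = s + ((n : ℝ) - s) by ring, Real.rpow_add hA0]
      apply mul_le_mul_of_nonneg_left _ (Real.rpow_nonneg hA0.le s)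
      rcases le_total A 1 with hA1 | hA1
      · calc A ^ ((n:ℝ) - s) ≤ A ^ (0:ℝ) :=
            Real.rpow_le_rpow_of_exponent_ge hA0 hA1 (by linarith)
          _ = 1 := Real.rpow_zero A
          _ ≤ max 1 A := le_max_left _ _
      · calc A ^ ((n:ℝ) - s) ≤ A ^ (1:ℝ) :=
            Real.rpow_le_rpow_of_exponent_le hA1 (by linarith)
          _ = A := Real.rpow_one A
          _ ≤ max 1 A := le_max_right _ _
    · rw [← Real.rpow_add hr0]
      apply Real.rpow_le_rpow_of_exponent_ge hr0 hr1.le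
      nlinarith [sq_nonneg ((n : ℝ) - s - 1/2)]
  calc (∏ k ∈ Finset.range n, f k) * ∏' k, f (k + n)
      ≤ (A ^ n * r ^ ((n : ℝ) * (n - 1) / 2 - n * s) * ∏' k : ℕ, (1 + A⁻¹ * r ^ k))
          * ∏' k : ℕ, (1 + A * r ^ k) := by
        apply mul_le_mul head_le tail_le htailpos
        have h1 : (0:ℝ) ≤ A ^ n * r ^ ((n : ℝ) * (n - 1) / 2 - n * s) := by positivity
        nlinarith [mul_nonneg h1 (le_trans zero_le_one hDA)]
    _ ≤ ((A ^ s * max 1 A) * (r ^ (-(8:ℝ)⁻¹) * r ^ (-s^2/2 - s/2))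
          * ∏' k : ℕ, (1 + A⁻¹ * r ^ k)) * ∏' k : ℕ, (1 + A * r ^ k) := by
        apply mul_le_mul_of_nonneg_right _ (le_trans zero_le_one hCA)
        exact mul_le_mul_of_nonneg_right core (le_trans zero_le_one hDA)
    _ = ((∏' k : ℕ, (1 + A * r ^ k)) * (∏' k : ℕ, (1 + A⁻¹ * r ^ k))
          * max 1 A * r ^ (-(8:ℝ)⁻¹)) * A ^ s * r ^ (-s^2/2 - s/2) := by ring

lemma upper_simple (c : ℂ) (d : ℝ) (hd : ‖c‖ ≤ d) {r : ℝ} (hr0 : 0 < r)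
    (hr1 : r < 1) :
    (∏' k : ℕ, ‖1 - c * (r : ℂ) ^ k‖) ≤ ∏' k : ℕ, (1 + d * r ^ k) := by
  apply tprod_le_tprod_real (fun k ↦ norm_nonneg _) _
    ((mult_c c hr0 hr1).norm) (multR d (le_trans (norm_nonneg c) hd) hr0 hr1)
  intro k
  calc ‖1 - c * (r:ℂ) ^ k‖
      ≤ ‖1‖ + ‖c * (r:ℂ) ^ k‖ := norm_sub_le _ _
    _ ≤ 1 + d * r ^ k := by
        rw [norm_one, norm_mul, norm_pow, Complex.norm_real, Real.norm_eq_abs, abs_of_pos hr0]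
        have : ‖c‖ * r ^ k ≤ d * r ^ k :=
          mul_le_mul_of_nonneg_right hd (pow_nonneg hr0.le k)
        linarith

lemma re_nonneg_factor (c : ℂ) (hcre : c.re ≤ 0) {r : ℝ} (hr0 : 0 < r) (k : ℕ) :
    1 ≤ ‖1 - c * (r : ℂ) ^ k‖ ∧
      ‖c‖ * r ^ k ≤ ‖1 - c * (r : ℂ) ^ k‖ := by
  have hw : (1 : ℂ) - c * (r:ℂ) ^ k = 1 + ((r ^ k : ℝ) : ℂ) * (-c) := by
    push_cast; ring
  have hre : 0 ≤ (((r ^ k : ℝ) : ℂ) * (-c)).re := by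
    rw [Complex.re_ofReal_mul]
    have : 0 ≤ (-c).re := by simp [Complex.neg_re]; linarith
    positivity
  obtain ⟨h1, h2⟩ := abs_one_add_ge hre
  constructor
  · rw [hw]; exact h1
  · rw [hw]
    refine le_trans (le_of_eq ?_) h2
    rw [norm_mul, Complex.norm_real, Real.norm_eq_abs, norm_neg, abs_of_pos (pow_pos hr0 k)]
    ring

lemma one_le_abs_poch (c : ℂ) (hcre : c.re ≤ 0) {r : ℝ} (hr0 : 0 < r) (hr1 : r < 1) :
    1 ≤ ∏' k : ℕ, ‖1 - c * (r : ℂ) ^ k‖ :=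
  one_le_tprod_real (fun k ↦ (re_nonneg_factor c hcre hr0 k).1)
    ((mult_c c hr0 hr1).norm)

lemma lower2 {q : ℝ} (hq0 : 0 < q) (hq1 : q < 1) (z : ℂ) (hz : 0 < z.re) (ζ : ℝ)
    (hζ : 0 ≤ ζ) :
    min 1 (‖z‖) * (‖z‖) ^ (-ζ) * q ^ (-ζ^2/2 + ζ/2)
      ≤ ∏' k : ℕ, ‖1 - (-((q ^ (1 - ζ) : ℝ) : ℂ) / z) * (q : ℂ) ^ k‖ := by
  have hzne : z ≠ 0 := fun h ↦ by simp [h] at hz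
  set Z := ‖z‖ with hZ
  have hZ0 : 0 < Z := norm_pos_iff.mpr hzne
  set t : ℝ := q ^ (1 - ζ) with ht
  have ht0 : 0 < t := Real.rpow_pos_of_pos hq0 _
  set c : ℂ := -((t : ℝ) : ℂ) / z with hc
  have hcre : c.re ≤ 0 := by
    rw [hc, neg_div, Complex.neg_re, div_eq_mul_inv, Complex.re_ofReal_mul]
    have h1 : 0 ≤ z⁻¹.re := by
      rw [Complex.inv_re]
      exact div_nonneg hz.le (Complex.normSq_nonneg z)
    nlinarith
  have habsc : ‖c‖ = t / Z := by
    rw [hc, norm_div, norm_neg, Complex.norm_real, Real.norm_eq_abs, abs_of_pos ht0]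
  set m := ⌊ζ⌋₊ with hm
  have hm1 : (m : ℝ) ≤ ζ := Nat.floor_le hζ
  have hm2 : ζ < (m : ℝ) + 1 := Nat.lt_floor_add_one ζ
  have step1 : (∏ k ∈ Finset.range m, (t / Z * q ^ k))
      ≤ ∏' k : ℕ, ‖1 - c * (q : ℂ) ^ k‖ := by
    refine le_trans ?_ (prod_le_tprod_real (Finset.range m)
      (fun k ↦ norm_nonneg _) (fun k _ ↦ (re_nonneg_factor c hcre hq0 k).1)
      ((mult_c c hq0 hq1).norm))
    apply Finset.prod_le_prod
    · intro k _; positivity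
    · intro k _
      have := (re_nonneg_factor c hcre hq0 k).2
      rwa [habsc] at this
  refine le_trans ?_ step1
  have heval : (∏ k ∈ Finset.range m, (t / Z * q ^ k))
      = t ^ m / Z ^ m * q ^ ((m : ℝ) * (m - 1) / 2) := by
    rw [Finset.prod_mul_distrib, Finset.prod_const, Finset.card_range, div_pow,
      Finset.prod_pow_eq_pow_sum]
    congr 1
    rw [← Real.rpow_natCast q (∑ k ∈ Finset.range m, k)]
    congr 1
    have : (∑ k ∈ Finset.range m, (k : ℝ)) = (m : ℝ) * (m - 1) / 2 := by
      induction m with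
      | zero => simp
      | succ l ih => rw [Finset.sum_range_succ, ih]; push_cast; ring
    rw [← this]
    push_cast
    rfl
  rw [heval]
  have e1 : t ^ m = q ^ ((1 - ζ) * m) := by
    rw [ht, ← Real.rpow_natCast (q ^ (1-ζ)) m, ← Real.rpow_mul hq0.le]
  have e2 : (Z : ℝ) ^ m = Z ^ (m : ℝ) := (Real.rpow_natCast Z m).symm
  rw [e1, e2, div_mul_eq_mul_div, ← Real.rpow_add hq0]
  rw [show q ^ ((1 - ζ) * (m:ℝ) + (m : ℝ) * ((m:ℝ) - 1) / 2) / Z ^ (m:ℝ)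
      = q ^ ((1 - ζ) * (m:ℝ) + (m : ℝ) * ((m:ℝ) - 1) / 2) * Z ^ (-(m:ℝ)) by
    rw [Real.rpow_neg hZ0.le, div_eq_mul_inv]]
  have hq_side : q ^ (-ζ^2/2 + ζ/2) ≤ q ^ ((1 - ζ) * m + (m : ℝ) * (m - 1) / 2) := by
    apply Real.rpow_le_rpow_of_exponent_ge hq0 hq1.le
    nlinarith [sq_nonneg (ζ - m), mul_nonneg (sub_nonneg.mpr hm1) (sub_nonneg.mpr hm1)]
  have hZ_side : min 1 Z * Z ^ (-ζ) ≤ Z ^ (-(m : ℝ)) := by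
    have : Z ^ (-(m:ℝ)) = Z ^ (ζ - m) * Z ^ (-ζ) := by
      rw [← Real.rpow_add hZ0]; congr 1; ring
    rw [this]
    apply mul_le_mul_of_nonneg_right _ (Real.rpow_nonneg hZ0.le _)
    rcases le_total Z 1 with h1 | h1
    · calc min 1 Z ≤ Z := min_le_right _ _
        _ = Z ^ (1:ℝ) := (Real.rpow_one Z).symm
        _ ≤ Z ^ (ζ - m) := Real.rpow_le_rpow_of_exponent_ge hZ0 h1 (by linarith)
    · calc min 1 Z ≤ 1 := min_le_left _ _
        _ = Z ^ (0:ℝ) := (Real.rpow_zero Z).symm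
        _ ≤ Z ^ (ζ - m) := Real.rpow_le_rpow_of_exponent_le h1 (by linarith)
  calc min 1 Z * Z ^ (-ζ) * q ^ (-ζ^2/2 + ζ/2)
      ≤ Z ^ (-(m:ℝ)) * q ^ ((1 - ζ) * m + (m : ℝ) * (m - 1) / 2) := by
        apply mul_le_mul hZ_side hq_side (Real.rpow_nonneg hq0.le _)
          (Real.rpow_nonneg hZ0.le _)
    _ = q ^ ((1 - ζ) * m + (m : ℝ) * (m - 1) / 2) * Z ^ (-(m:ℝ)) := by ring

open MeasureTheory

/-- The infinite q-Pochhammer symbol `(a; q)_∞ = ∏_{k=0}^∞ (1 - a q^k)`. -/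
noncomputable def qPoch (a q : ℂ) : ℂ := ∏' k : ℕ, (1 - a * q ^ k)

theorem stmt_1 (p q α : ℝ) (hp : 0 < p) (hpq : p < q) (hq : q < 1)
    (hα : 0 < α) (hα1 : α < 1) (hqα : q = p ^ α)
    (a b : ℂ) (ha : a ≠ 0) (z : ℂ) (hz : 0 < z.re) :
    ∃ C > (0 : ℝ), ∃ ζ₀ : ℝ, ∀ ζ ≥ ζ₀,
      ‖
        ((qPoch (b * ((q ^ ζ : ℝ) : ℂ)) p * qPoch (a * ((q ^ (-ζ) : ℝ) : ℂ)) p) /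
          (qPoch (-z * ((q ^ ζ : ℝ) : ℂ)) q * qPoch (-((q ^ (1 - ζ) : ℝ) : ℂ) / z) q))‖
      ≤ C * (‖z‖ * ‖a‖ ^ α / q) ^ ζ * q ^ ((1 - α) * ζ ^ 2 / 2) := by
  have hq0 : 0 < q := hp.trans hpq
  have hp1 : p < 1 := hpq.trans hq
  have hA0 : 0 < ‖a‖ := norm_pos_iff.mpr ha
  have hzne : z ≠ 0 := fun h ↦ by simp [h] at hz
  have hZ0 : 0 < ‖z‖ := norm_pos_iff.mpr hzne
  set A := ‖a‖ with hA
  set Z := ‖z‖ with hZ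
  set B := ‖b‖ with hB
  set Cb := ∏' k : ℕ, (1 + B * p ^ k) with hCb
  set K2 := (∏' k : ℕ, (1 + A * p ^ k)) * (∏' k : ℕ, (1 + A⁻¹ * p ^ k)) * max 1 A
      * p ^ (-(8:ℝ)⁻¹) with hK2
  have hCb1 : 1 ≤ Cb := one_le_multR B (norm_nonneg b) hp hp1
  have hK20 : 0 < K2 := by
    have h1 := one_le_multR A hA0.le hp hp1
    have h2 := one_le_multR A⁻¹ (inv_nonneg.mpr hA0.le) hp hp1
    have h3 : (0:ℝ) < max 1 A := lt_of_lt_of_le one_pos (le_max_left _ _)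
    have h4 : (0:ℝ) < p ^ (-(8:ℝ)⁻¹) := Real.rpow_pos_of_pos hp _
    rw [hK2]
    exact mul_pos (mul_pos (mul_pos (lt_of_lt_of_le one_pos h1)
      (lt_of_lt_of_le one_pos h2)) h3) h4
  have hmin0 : (0:ℝ) < min 1 Z := lt_min one_pos hZ0
  refine ⟨Cb * K2 / min 1 Z, by positivity, 0, fun ζ hζ ↦ ?_⟩
  have hqζ1 : q ^ ζ ≤ 1 := Real.rpow_le_one hq0.le hq.le hζ
  have hs0 : 0 ≤ α * ζ := mul_nonneg hα.le hζ
  -- rewrite q^(-ζ) in terms of p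
  have hqp : q ^ (-ζ) = p ^ (-(α * ζ)) := by
    rw [hqα, ← Real.rpow_mul hp.le]
    congr 1; ring
  -- the four multipliability facts
  have m1 := mult_c (b * ((q ^ ζ : ℝ) : ℂ)) hp hp1
  have m2 := mult_c (a * ((q ^ (-ζ) : ℝ) : ℂ)) hp hp1
  have m3 := mult_c (-z * ((q ^ ζ : ℝ) : ℂ)) hq0 hq
  have m4 := mult_c (-((q ^ (1 - ζ) : ℝ) : ℂ) / z) hq0 hq
  have habs : ‖
        ((qPoch (b * ((q ^ ζ : ℝ) : ℂ)) p * qPoch (a * ((q ^ (-ζ) : ℝ) : ℂ)) p) /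
          (qPoch (-z * ((q ^ ζ : ℝ) : ℂ)) q * qPoch (-((q ^ (1 - ζ) : ℝ) : ℂ) / z) q))‖
      = (∏' k : ℕ, ‖1 - (b * ((q ^ ζ : ℝ) : ℂ)) * (p:ℂ) ^ k‖)
          * (∏' k : ℕ, ‖1 - (a * ((q ^ (-ζ) : ℝ) : ℂ)) * (p:ℂ) ^ k‖)
        / ((∏' k : ℕ, ‖1 - (-z * ((q ^ ζ : ℝ) : ℂ)) * (q:ℂ) ^ k‖)
          * (∏' k : ℕ, ‖1 - (-((q ^ (1 - ζ) : ℝ) : ℂ) / z) * (q:ℂ) ^ k‖)) := by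
    simp only [qPoch]
    rw [norm_div, norm_mul, norm_mul, m1.norm_tprod, m2.norm_tprod,
      m3.norm_tprod, m4.norm_tprod]
  rw [habs]
  -- numerator bounds
  have hX : (∏' k : ℕ, ‖1 - (b * ((q ^ ζ : ℝ) : ℂ)) * (p:ℂ) ^ k‖) ≤ Cb := by
    apply upper_simple _ B _ hp hp1
    rw [norm_mul, Complex.norm_real, Real.norm_eq_abs, abs_of_pos (Real.rpow_pos_of_pos hq0 _)]
    nlinarith [norm_nonneg b]
  have hY : (∏' k : ℕ, ‖1 - (a * ((q ^ (-ζ) : ℝ) : ℂ)) * (p:ℂ) ^ k‖)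
      ≤ K2 * A ^ (α * ζ) * p ^ (-(α*ζ)^2/2 - (α*ζ)/2) := by
    rw [hqp]
    exact upper2 a ha hp hp1 (α * ζ) hs0
  -- denominator bounds
  have hU : 1 ≤ ∏' k : ℕ, ‖1 - (-z * ((q ^ ζ : ℝ) : ℂ)) * (q:ℂ) ^ k‖ := by
    apply one_le_abs_poch _ _ hq0 hq
    have : (-z * ((q ^ ζ : ℝ) : ℂ)).re = -z.re * q ^ ζ := by
      simp [Complex.mul_re]
    rw [this]
    nlinarith [Real.rpow_pos_of_pos hq0 ζ]
  have hV := lower2 hq0 hq z hz ζ hζ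
  have hXnn : (0:ℝ) ≤ ∏' k : ℕ, ‖1 - (b * ((q ^ ζ : ℝ) : ℂ)) * (p:ℂ) ^ k‖ :=
    tprod_nonneg_real (fun k ↦ norm_nonneg _) (m1.norm)
  have hVpos : (0:ℝ) < min 1 Z * Z ^ (-ζ) * q ^ (-ζ^2/2 + ζ/2) := by positivity
  have step : (∏' k : ℕ, ‖1 - (b * ((q ^ ζ : ℝ) : ℂ)) * (p:ℂ) ^ k‖)
          * (∏' k : ℕ, ‖1 - (a * ((q ^ (-ζ) : ℝ) : ℂ)) * (p:ℂ) ^ k‖)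
        / ((∏' k : ℕ, ‖1 - (-z * ((q ^ ζ : ℝ) : ℂ)) * (q:ℂ) ^ k‖)
          * (∏' k : ℕ, ‖1 - (-((q ^ (1 - ζ) : ℝ) : ℂ) / z) * (q:ℂ) ^ k‖))
      ≤ Cb * (K2 * A ^ (α * ζ) * p ^ (-(α*ζ)^2/2 - (α*ζ)/2))
        / (1 * (min 1 Z * Z ^ (-ζ) * q ^ (-ζ^2/2 + ζ/2))) := by
    apply div_le_div₀
    · have : (0:ℝ) ≤ K2 * A ^ (α * ζ) * p ^ (-(α*ζ)^2/2 - (α*ζ)/2) := by positivity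
      nlinarith
    · apply mul_le_mul hX hY _ (le_trans zero_le_one hCb1)
      exact tprod_nonneg_real (fun k ↦ norm_nonneg _) (m2.norm)
    · rw [one_mul]; exact hVpos
    · exact mul_le_mul hU hV hVpos.le (le_trans zero_le_one hU)
  refine step.trans (le_of_eq ?_)
  rw [one_mul]
  -- final algebraic identity
  have hq2 : q ^ (-ζ) * q ^ ((1-α)*ζ^2/2) * q ^ (-ζ^2/2 + ζ/2)
      = p ^ (-(α*ζ)^2/2 - (α*ζ)/2) := by
    rw [hqα, ← Real.rpow_mul hp.le, ← Real.rpow_mul hp.le, ← Real.rpow_mul hp.le,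
      ← Real.rpow_add hp, ← Real.rpow_add hp]
    congr 1; ring
  have hrhs : (Z * A ^ α / q) ^ ζ = Z ^ ζ * A ^ (α * ζ) * q ^ (-ζ) := by
    rw [Real.div_rpow (by positivity) hq0.le,
      Real.mul_rpow hZ0.le (Real.rpow_nonneg hA0.le α), ← Real.rpow_mul hA0.le,
      Real.rpow_neg hq0.le, div_eq_mul_inv]
  have hZmZ : Z ^ ζ = (Z ^ (-ζ))⁻¹ := by rw [Real.rpow_neg hZ0.le, inv_inv]
  rw [hrhs, ← hq2, hZmZ]
  have h1 : Z ^ (-ζ) ≠ 0 := ne_of_gt (Real.rpow_pos_of_pos hZ0 _)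
  have h2 : q ^ (-ζ^2/2 + ζ/2) ≠ 0 := ne_of_gt (Real.rpow_pos_of_pos hq0 _)
  have h3 : min 1 Z ≠ 0 := ne_of_gt hmin0
  field_simp
end

section
/- Let 0 < p < q < 1 be real, let a, b be complex numbers, and let z be a complex number with Re z > 0. Define f(a, b, z) = ((-z, -q/z; q)_∞ / log(1/q)) · ∫_0^∞ (b t, a/t; p)_∞ / ((-z t, -q/(z t); q)_∞) dt/t. Then f satisfies the functional equation f(a, b, z) = f(a, b p, z) - b · f(a, b p, q z). -/
open MeasureTheory

/-- `f(a,b,z) = ((-z, -q/z; q)_∞ / log(1/q)) ∫_0^∞ (bt, a/t; p)_∞ / (-zt, -q/(zt); q)_∞ dt/t`. -/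
noncomputable def f (p q : ℝ) (a b z : ℂ) : ℂ :=
  (qPoch (-z) q * qPoch (-(q : ℂ) / z) q) / ((Real.log (1 / q) : ℝ) : ℂ) *
    ∫ t in Set.Ioi (0 : ℝ),
      (qPoch (b * (t : ℂ)) p * qPoch (a / (t : ℂ)) p) /
        (qPoch (-z * (t : ℂ)) q * qPoch (-(q : ℂ) / (z * (t : ℂ))) q) / (t : ℂ)

open Complex Filter NNReal Set

lemma mult_aux (u : ℂ) {r : ℝ} (hr0 : 0 ≤ r) (hr1 : r < 1) :
    Multipliable (fun k : ℕ => 1 - u * (r:ℂ)^k) := by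
  by_cases hzero : ∃ k : ℕ, 1 - u * (r:ℂ)^k = 0
  · obtain ⟨k0, hk0⟩ := hzero
    refine ⟨0, ?_⟩
    have hev : ∀ᶠ s : Finset ℕ in atTop, ∏ i ∈ s, (1 - u * (r:ℂ)^i) = 0 := by
      filter_upwards [eventually_ge_atTop ({k0} : Finset ℕ)] with s hs
      exact Finset.prod_eq_zero (hs (Finset.mem_singleton_self k0)) hk0
    exact Tendsto.congr' (Filter.EventuallyEq.symm hev) tendsto_const_nhds
  · push_neg at hzero
    have htend : Tendsto (fun k : ℕ => ‖u‖ * r^k) atTop (nhds 0) := by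
      simpa using (tendsto_pow_atTop_nhds_zero_of_lt_one hr0 hr1).const_mul ‖u‖
    obtain ⟨K, hK⟩ := (eventually_atTop).1 <|
      htend.eventually (eventually_le_nhds (by norm_num : (0:ℝ) < 1/2))
    have hsum : Summable fun k : ℕ => Complex.log (1 - u * (r:ℂ)^k) := by
      rw [← _root_.summable_nat_add_iff K]
      apply Summable.of_norm_bounded (g := fun n : ℕ => 3/2 * (‖u‖ * r^(n+K)))
      · have : Summable (fun n : ℕ => r ^ n) := summable_geometric_of_lt_one hr0 hr1
        simpa [pow_add, mul_comm, mul_assoc, mul_left_comm] using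
          ((this.mul_left (3/2 * (‖u‖ * r^K))))
      · intro n
        have hsmall : ‖-(u * (r:ℂ)^(n+K))‖ ≤ 1/2 := by
          rw [norm_neg, norm_mul, norm_pow, Complex.norm_real, Real.norm_of_nonneg hr0]
          calc ‖u‖ * r^(n+K) ≤ ‖u‖ * r^(K) := by
                have := pow_le_pow_of_le_one hr0 hr1.le (show K ≤ n + K by omega)
                gcongr
            _ ≤ 1/2 := hK K le_rfl |>.trans_eq rfl
        have h2 : (1 : ℂ) - u * (r:ℂ)^(n+K) = 1 + -(u * (r:ℂ)^(n+K)) := by ring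
        rw [h2]
        calc ‖Complex.log (1 + -(u * (r:ℂ)^(n+K)))‖ ≤ 3/2 * ‖-(u * (r:ℂ)^(n+K))‖ :=
              Complex.norm_log_one_add_half_le_self hsmall
          _ = 3/2 * (‖u‖ * r^(n+K)) := by
              rw [norm_neg, norm_mul, norm_pow, Complex.norm_real, Real.norm_of_nonneg hr0]
    exact Complex.multipliable_of_summable_log hsum

lemma mult_aux' (u : ℂ) {r : ℝ} (hr0 : 0 ≤ r) (hr1 : r < 1) :
    Multipliable (fun k : ℕ => 1 - u * (r:ℂ)^(k+1)) := by
  refine (mult_aux (u * r) hr0 hr1).congr fun k => ?_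
  ring

lemma qPoch_shift (u : ℂ) {r : ℝ} (hr0 : 0 ≤ r) (hr1 : r < 1) :
    qPoch u (r:ℂ) = (1 - u) * qPoch (u * (r:ℂ)) (r:ℂ) := by
  have h := tprod_eq_zero_mul' (f := fun k : ℕ => 1 - u * (r:ℂ)^k) (mult_aux' u hr0 hr1)
  rw [qPoch, h]
  congr 1
  · simp
  · rw [qPoch]
    exact tprod_congr fun k => by ring

lemma nnnorm_qPoch (u : ℂ) {r : ℝ} (hr0 : 0 ≤ r) (hr1 : r < 1) :
    ‖qPoch u (r:ℂ)‖₊ = ∏' k : ℕ, ‖1 - u * (r:ℂ)^k‖₊ := by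
  exact (mult_aux u hr0 hr1).map_tprod (nnnormHom : ℂ →*₀ ℝ≥0) continuous_nnnorm

lemma mult_nnnorm (u : ℂ) {r : ℝ} (hr0 : 0 ≤ r) (hr1 : r < 1) :
    Multipliable (fun k : ℕ => ‖1 - u * (r:ℂ)^k‖₊) :=
  (mult_aux u hr0 hr1).map (nnnormHom : ℂ →*₀ ℝ≥0) continuous_nnnorm

lemma mult_nn (x : ℝ≥0) {r : ℝ≥0} (hr1 : r < 1) :
    Multipliable (fun k : ℕ => 1 + x * r^k) := by
  have h := mult_nnnorm (-(x:ℝ) : ℂ) (r := (r:ℝ)) r.coe_nonneg (by exact_mod_cast hr1)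
  refine h.congr fun k => ?_
  have h2 : (1:ℂ) - (-(x:ℝ):ℂ) * ((r:ℝ):ℂ)^k = (((1 + x * r^k : ℝ≥0) : ℝ) : ℂ) := by
    push_cast; ring
  rw [h2, Complex.nnnorm_real]
  exact NNReal.nnnorm_eq _

lemma qPoch_nnnorm_le (u : ℂ) {r : ℝ≥0} (hr1 : r < 1) :
    ‖qPoch u ((r:ℝ):ℂ)‖₊ ≤ ∏' k : ℕ, (1 + ‖u‖₊ * r^k) := by
  rw [nnnorm_qPoch u r.coe_nonneg (by exact_mod_cast hr1)]
  refine Multipliable.tprod_le_tprod (fun k => ?_)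
    (mult_nnnorm u r.coe_nonneg (by exact_mod_cast hr1)) (mult_nn _ hr1)
  calc ‖1 - u * ((r:ℝ):ℂ)^k‖₊ ≤ ‖(1:ℂ)‖₊ + ‖u * ((r:ℝ):ℂ)^k‖₊ := nnnorm_sub_le _ _
    _ = 1 + ‖u‖₊ * r^k := by
        rw [nnnorm_one, nnnorm_mul, nnnorm_pow, Complex.nnnorm_real, NNReal.nnnorm_eq]

lemma le_qPoch_nnnorm {w : ℂ} (hw : 0 ≤ w.re) {r : ℝ≥0} (hr1 : r < 1) :
    (∏' k : ℕ, (1 + w.re.toNNReal * r^k)) ≤ ‖qPoch (-w) ((r:ℝ):ℂ)‖₊ := by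
  rw [nnnorm_qPoch (-w) r.coe_nonneg (by exact_mod_cast hr1)]
  refine Multipliable.tprod_le_tprod (fun k => ?_) (mult_nn _ hr1)
    (mult_nnnorm (-w) r.coe_nonneg (by exact_mod_cast hr1))
  rw [← NNReal.coe_le_coe]
  have h1 : (1:ℂ) - (-w) * ((r:ℝ):ℂ)^k = 1 + w * (((r:ℝ)^k : ℝ) : ℂ) := by push_cast; ring
  have h2 : ((1:ℂ) + w * (((r:ℝ)^k : ℝ) : ℂ)).re = 1 + w.re * (r:ℝ)^k := by
    simp [Complex.add_re, Complex.mul_re, ← Complex.ofReal_pow]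
  calc ((1 + w.re.toNNReal * r^k : ℝ≥0) : ℝ) = 1 + w.re * (r:ℝ)^k := by
        push_cast [Real.coe_toNNReal _ hw]; ring
    _ = ((1:ℂ) - (-w) * ((r:ℝ):ℂ)^k).re := by rw [h1, h2]
    _ ≤ ‖(1:ℂ) - (-w) * ((r:ℝ):ℂ)^k‖ := Complex.re_le_norm _
    _ = _ := rfl

lemma one_le_prod_nn (x : ℝ≥0) (r : ℝ≥0) : (1:ℝ≥0) ≤ ∏' k : ℕ, (1 + x * r^k) :=
  one_le_tprod fun k => le_self_add

lemma one_le_qPoch_nnnorm {w : ℂ} (hw : 0 ≤ w.re) {r : ℝ≥0} (hr1 : r < 1) :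
    1 ≤ ‖qPoch (-w) ((r:ℝ):ℂ)‖₊ :=
  le_trans (one_le_prod_nn _ _) (le_qPoch_nnnorm hw hr1)

lemma prod_nn_mono {x y : ℝ≥0} (h : x ≤ y) {r : ℝ≥0} (hr1 : r < 1) :
    (∏' k : ℕ, (1 + x * r^k)) ≤ ∏' k : ℕ, (1 + y * r^k) :=
  Multipliable.tprod_le_tprod (fun k => by gcongr) (mult_nn _ hr1) (mult_nn _ hr1)

lemma ratio_bound {P Q : ℝ≥0} (hP0 : 0 < P) (hPQ : P < Q) (hQ1 : Q < 1) (β : ℝ≥0)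
    {c : ℝ≥0} (hc : 0 < c) :
    ∃ C : ℝ≥0, ∀ s : ℝ≥0, 1 ≤ s →
      (∏' k : ℕ, (1 + β * s * P^k)) * s^2 ≤ C * ∏' k : ℕ, (1 + c * s * Q^k) := by
  have hQ0 : 0 < Q := hP0.trans hPQ
  set c' : ℝ≥0 := c * Q^2 with hc'def
  have hc'0 : 0 < c' := mul_pos hc (pow_pos hQ0 2)
  -- choose K with β * P^K ≤ c' * Q^K
  obtain ⟨K, hK⟩ : ∃ K : ℕ, β * P^K ≤ c' * Q^K := by
    rcases eq_or_lt_of_le (show (0:ℝ≥0) ≤ β from zero_le) with hβ | hβ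
    · exact ⟨0, by simp [← hβ]⟩
    · obtain ⟨K, hK⟩ := _root_.exists_pow_lt_of_lt_one
        (show (0:ℝ) < (c':ℝ)/(β:ℝ) by
          have h1 : (0:ℝ) < (c':ℝ) := by exact_mod_cast hc'0
          have h2 : (0:ℝ) < (β:ℝ) := by exact_mod_cast hβ
          positivity)
        (show (P:ℝ)/(Q:ℝ) < 1 by
          rw [div_lt_one (by exact_mod_cast hQ0)]; exact_mod_cast hPQ)
      refine ⟨K, ?_⟩
      rw [← NNReal.coe_le_coe]
      push_cast
      rw [div_pow, div_lt_div_iff₀ (by positivity) (by exact_mod_cast hβ)] at hK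
      nlinarith [hK]
  refine ⟨(1+β)^K / (c * Q^(K+2))^(K+2), fun s hs => ?_⟩
  have hs0 : (0:ℝ≥0) < s := lt_of_lt_of_le one_pos hs
  set C : ℝ≥0 := (1+β)^K / (c * Q^(K+2))^(K+2) with hCdef
  have hXne : ((c * Q^(K+2))^(K+2) : ℝ≥0) ≠ 0 := by positivity
  have hCX : C * (c * Q^(K+2))^(K+2) = (1+β)^K := div_mul_cancel₀ _ hXne
  set T : ℝ≥0 := ∏' k : ℕ, (1 + c' * s * Q^(k+K)) with hTdef
  have hTmult : Multipliable (fun k : ℕ => 1 + c' * s * Q^(k+K)) :=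
    (mult_nn (c'*s*Q^K) hQ1).congr (fun k => by rw [pow_add]; ring)
  -- step 1
  have hshift1 : Multipliable (fun k : ℕ => 1 + β * s * P^(k+K)) :=
    (mult_nn (β*s*P^K) (hPQ.trans hQ1)).congr (fun k => by rw [pow_add]; ring)
  have step1 : (∏' k : ℕ, (1 + β * s * P^k)) ≤ ((1+β)*s)^K * T := by
    rw [← Multipliable.prod_mul_tprod_nat_mul' (f := fun k : ℕ => 1 + β * s * P^k) hshift1]
    refine mul_le_mul' ?_ ?_
    · calc ∏ k ∈ Finset.range K, (1 + β * s * P^k)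
          ≤ ∏ _k ∈ Finset.range K, ((1+β)*s) := by
            refine Finset.prod_le_prod' fun k _ => ?_
            calc 1 + β * s * P^k ≤ 1 + β * s * 1 := by
                  gcongr
                  exact pow_le_one' (le_of_lt (hPQ.trans hQ1)) k
              _ = 1 + β * s := by ring
              _ ≤ s + β * s := by gcongr
              _ = (1+β)*s := by ring
        _ = ((1+β)*s)^K := by rw [Finset.prod_const, Finset.card_range]
    · refine Multipliable.tprod_le_tprod (fun k => ?_) hshift1 hTmult
      refine add_le_add_right ?_ 1
      calc β * s * P^(k+K) = (β * P^K) * s * P^k := by rw [pow_add]; ring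
        _ ≤ (c' * Q^K) * s * Q^k := by
            refine mul_le_mul' (mul_le_mul' hK le_rfl) ?_
            exact pow_le_pow_left₀ zero_le hPQ.le k
        _ = c' * s * Q^(k+K) := by rw [pow_add]; ring
  -- step 2
  have hshift2 : Multipliable (fun k : ℕ => 1 + c * s * Q^(k+(K+2))) :=
    (mult_nn (c*s*Q^(K+2)) hQ1).congr (fun k => by rw [pow_add]; ring)
  have step2 : (c * Q^(K+2))^(K+2) * s^(K+2) * T ≤ ∏' k : ℕ, (1 + c * s * Q^k) := by
    rw [← Multipliable.prod_mul_tprod_nat_mul' (f := fun k : ℕ => 1 + c * s * Q^k) hshift2]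
    have htail : T = ∏' k : ℕ, (1 + c * s * Q^(k+(K+2))) :=
      tprod_congr fun k => by rw [hc'def, pow_add, pow_add]; ring
    have h2' : (c * Q^(K+2))^(K+2) * s^(K+2)
        ≤ ∏ k ∈ Finset.range (K+2), (1 + c * s * Q^k) := by
      calc (c * Q^(K+2))^(K+2) * s^(K+2) = ∏ _k ∈ Finset.range (K+2), (c * s * Q^(K+2)) := by
            rw [Finset.prod_const, Finset.card_range, mul_pow, mul_pow]; ring
        _ ≤ ∏ k ∈ Finset.range (K+2), (1 + c * s * Q^k) := by
            refine Finset.prod_le_prod' fun k hk => ?_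
            have hk' : k ≤ K+2 := le_of_lt (Finset.mem_range.1 hk)
            calc c * s * Q^(K+2) ≤ c * s * Q^k :=
                  mul_le_mul_right (pow_le_pow_of_le_one zero_le hQ1.le hk') (c*s)
              _ ≤ 1 + c * s * Q^k := le_add_self
    calc (c * Q^(K+2))^(K+2) * s^(K+2) * T
        ≤ (∏ k ∈ Finset.range (K+2), (1 + c * s * Q^k)) * T := mul_le_mul_left h2' T
      _ = (∏ k ∈ Finset.range (K+2), (1 + c * s * Q^k)) *
            ∏' k : ℕ, (1 + c * s * Q^(k+(K+2))) := by rw [htail]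
  calc (∏' k : ℕ, (1 + β * s * P^k)) * s^2 ≤ (((1+β)*s)^K * T) * s^2 :=
        mul_le_mul_left step1 _
    _ = C * ((c * Q^(K+2))^(K+2) * s^(K+2) * T) := by
        have hsp : s^(K+2) = s^K * s^2 := pow_add s K 2
        rw [mul_pow, hsp, ← hCX]; ring
    _ ≤ C * ∏' k : ℕ, (1 + c * s * Q^k) := mul_le_mul_right step2 C

lemma qPoch_nnnorm_le' (u : ℂ) {r : ℝ≥0} (hr1 : r < 1) {x : ℝ≥0} (hx : ‖u‖₊ ≤ x) :
    ‖qPoch u ((r:ℝ):ℂ)‖₊ ≤ ∏' k : ℕ, (1 + x * r^k) :=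
  (qPoch_nnnorm_le u hr1).trans (prod_nn_mono hx hr1)

lemma le_qPoch_nnnorm' {w : ℂ} {r : ℝ≥0} (hr1 : r < 1) {x : ℝ≥0} (hx : (x:ℝ) ≤ w.re) :
    (∏' k : ℕ, (1 + x * r^k)) ≤ ‖qPoch (-w) ((r:ℝ):ℂ)‖₊ := by
  have hw : 0 ≤ w.re := le_trans x.coe_nonneg hx
  refine le_trans (prod_nn_mono ?_ hr1) (le_qPoch_nnnorm hw hr1)
  exact (Real.le_toNNReal_iff_coe_le hw).2 hx

lemma measurable_qPoch_comp {r : ℝ} (hr0 : 0 ≤ r) (hr1 : r < 1) {u : ℝ → ℂ}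
    (hu : Measurable u) : Measurable fun t => qPoch (u t) (r:ℂ) := by
  apply measurable_of_tendsto_metrizable
    (f := fun n t => ∏ k ∈ Finset.range n, (1 - u t * (r:ℂ)^k))
  · intro n
    refine Finset.measurable_prod _ fun k _ => ?_
    exact measurable_const.sub (hu.mul measurable_const)
  · rw [tendsto_pi_nhds]
    intro t
    exact (mult_aux (u t) hr0 hr1).hasProd.tendsto_prod_nat

lemma integrable_main (p q : ℝ) (hp : 0 < p) (hpq : p < q) (hq : q < 1)
    (a b' z : ℂ) (hz : 0 < z.re) :
    IntegrableOn (fun t : ℝ => (qPoch (b' * ↑t) ↑p * qPoch (a / ↑t) ↑p) /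
      (qPoch (-z * ↑t) ↑q * qPoch (-↑q / (z * ↑t)) ↑q)) (Set.Ioi 0) ∧
    IntegrableOn (fun t : ℝ => (qPoch (b' * ↑t) ↑p * qPoch (a / ↑t) ↑p) /
      (qPoch (-z * ↑t) ↑q * qPoch (-↑q / (z * ↑t)) ↑q) / ↑t) (Set.Ioi 0) := by
  have hq0 : 0 < q := hp.trans hpq
  have hz0 : z ≠ 0 := fun h => by simp [h] at hz
  set Pn : ℝ≥0 := p.toNNReal with hPn
  set Qn : ℝ≥0 := q.toNNReal with hQn
  have hPc : (Pn : ℝ) = p := Real.coe_toNNReal p hp.le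
  have hQc : (Qn : ℝ) = q := Real.coe_toNNReal q hq0.le
  have hPn0 : 0 < Pn := by rw [← NNReal.coe_lt_coe, hPc]; exact hp
  have hPQn : Pn < Qn := by rw [← NNReal.coe_lt_coe, hPc, hQc]; exact hpq
  have hQn1 : Qn < 1 := by rw [← NNReal.coe_lt_coe, hQc]; exact hq
  have hPn1 : Pn < 1 := hPQn.trans hQn1
  have hpc : (p : ℂ) = ((Pn:ℝ):ℂ) := by rw [hPc]
  have hqc : (q : ℂ) = ((Qn:ℝ):ℂ) := by rw [hQc]
  set A : ℝ≥0 := ‖a‖₊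
  set B : ℝ≥0 := ‖b'‖₊
  set cz : ℝ≥0 := z.re.toNNReal with hcz
  have hcz0 : 0 < cz := Real.toNNReal_pos.2 hz
  have hczc : (cz : ℝ) = z.re := Real.coe_toNNReal _ hz.le
  have hrez : 0 < (z⁻¹).re := by
    rw [Complex.inv_re]
    exact div_pos hz (Complex.normSq_pos.2 hz0)
  set c2 : ℝ≥0 := (q * (z⁻¹).re).toNNReal with hc2
  have hc20 : 0 < c2 := Real.toNNReal_pos.2 (mul_pos hq0 hrez)
  have hc2c : (c2 : ℝ) = q * (z⁻¹).re := Real.coe_toNNReal _ (mul_pos hq0 hrez).le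
  set CA : ℝ≥0 := ∏' k : ℕ, (1 + A * Pn^k) with hCA
  set CB : ℝ≥0 := ∏' k : ℕ, (1 + B * Pn^k) with hCB
  obtain ⟨C₁, hC₁⟩ := ratio_bound hPn0 hPQn hQn1 B hcz0
  obtain ⟨C₂, hC₂⟩ := ratio_bound hPn0 hPQn hQn1 A hc20
  set M2 : ℝ≥0 := CA * C₁ with hM2
  set M1 : ℝ≥0 := CB * C₂ with hM1
  set h : ℝ → ℂ := fun t : ℝ => (qPoch (b' * ↑t) ↑p * qPoch (a / ↑t) ↑p) /
      (qPoch (-z * ↑t) ↑q * qPoch (-↑q / (z * ↑t)) ↑q) with hh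
  -- norm computations valid for all t > 0
  have hre1 : ∀ t : ℝ, 0 < t → (cz * t.toNNReal : ℝ) ≤ (z * ↑t).re := by
    intro t ht
    have : (z * (t:ℂ)).re = z.re * t := by simp [Complex.mul_re]
    rw [this, hczc, Real.coe_toNNReal _ ht.le]
  have hre2 : ∀ t : ℝ, 0 < t → (c2 * (t.toNNReal)⁻¹ : ℝ) ≤ ((q:ℂ) / (z * ↑t)).re := by
    intro t ht
    have htc : (t:ℂ) ≠ 0 := Complex.ofReal_ne_zero.mpr ht.ne'
    have hz0' : z ≠ 0 := hz0
    have harg : ((q:ℂ) / (z * ↑t)) = ((q/t : ℝ):ℂ) * z⁻¹ := by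
      push_cast
      rw [div_eq_iff (mul_ne_zero hz0' htc)]
      field_simp
    rw [harg]
    have hre : (((q/t : ℝ):ℂ) * z⁻¹).re = (q/t) * (z⁻¹).re := by
      simp [Complex.mul_re]
    rw [hre, hc2c]
    apply le_of_eq
    rw [NNReal.coe_inv, Real.coe_toNNReal _ ht.le]
    field_simp
  -- main bound for t ≥ 1
  have key2 : ∀ t : ℝ, 1 ≤ t → ‖h t‖₊ ≤ M2 / (t.toNNReal)^2 := by
    intro t ht1
    have ht : (0:ℝ) < t := lt_of_lt_of_le one_pos ht1
    set T : ℝ≥0 := t.toNNReal with hT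
    have hTc : (T : ℝ) = t := Real.coe_toNNReal _ ht.le
    have hT1 : (1:ℝ≥0) ≤ T := by rw [← NNReal.coe_le_coe, hTc]; exact ht1
    have hT0 : (0:ℝ≥0) < T := lt_of_lt_of_le one_pos hT1
    have hTnn : ‖((t:ℝ):ℂ)‖₊ = T := by
      rw [Complex.nnnorm_real, ← Real.toNNReal_eq_nnnorm_of_nonneg ht.le]
    have hn1 : ‖qPoch (b' * ↑t) ↑p‖₊ ≤ ∏' k : ℕ, (1 + B * T * Pn^k) := by
      rw [hpc]
      refine qPoch_nnnorm_le' _ hPn1 ?_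
      rw [nnnorm_mul, hTnn]
    have hn2 : ‖qPoch (a / ↑t) ↑p‖₊ ≤ CA := by
      rw [hpc, hCA]
      refine qPoch_nnnorm_le' _ hPn1 ?_
      rw [nnnorm_div, hTnn]
      calc ‖a‖₊ / T ≤ ‖a‖₊ / 1 := by gcongr
        _ = ‖a‖₊ := by rw [div_one]
    have hd1 : (∏' k : ℕ, (1 + cz * T * Qn^k)) ≤ ‖qPoch (-z * ↑t) ↑q‖₊ := by
      rw [hqc, show -z * (t:ℂ) = -(z * ↑t) by ring]
      exact le_qPoch_nnnorm' hQn1 (hre1 t ht)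
    have hd2 : (1:ℝ≥0) ≤ ‖qPoch (-↑q / (z * ↑t)) ↑q‖₊ := by
      rw [hqc, show -((Qn:ℝ):ℂ) / (z * ↑t) = -(((Qn:ℝ):ℂ) / (z * ↑t)) by ring]
      refine one_le_qPoch_nnnorm ?_ hQn1
      rw [hQc]
      exact le_trans (by positivity) (hre2 t ht)
    have hY1 : (1:ℝ≥0) ≤ ∏' k : ℕ, (1 + cz * T * Qn^k) := one_le_prod_nn _ _
    have hnn : ‖h t‖₊ = ‖qPoch (b' * ↑t) ↑p‖₊ * ‖qPoch (a / ↑t) ↑p‖₊ /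
        (‖qPoch (-z * ↑t) ↑q‖₊ * ‖qPoch (-↑q / (z * ↑t)) ↑q‖₊) := by
      rw [hh]; simp [nnnorm_div, nnnorm_mul]
    rw [hnn]
    have step : ‖qPoch (b' * ↑t) ↑p‖₊ * ‖qPoch (a / ↑t) ↑p‖₊ /
        (‖qPoch (-z * ↑t) ↑q‖₊ * ‖qPoch (-↑q / (z * ↑t)) ↑q‖₊) ≤
        ((∏' k : ℕ, (1 + B * T * Pn^k)) * CA) / (∏' k : ℕ, (1 + cz * T * Qn^k)) := by
      gcongr
      calc (∏' k : ℕ, (1 + cz * T * Qn^k))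
            = (∏' k : ℕ, (1 + cz * T * Qn^k)) * 1 := (mul_one _).symm
          _ ≤ _ := mul_le_mul' hd1 hd2
    refine le_trans step ?_
    rw [div_le_div_iff₀ (lt_of_lt_of_le one_pos hY1) (pow_pos hT0 2)]
    calc (∏' k : ℕ, (1 + B * T * Pn^k)) * CA * T^2
        = ((∏' k : ℕ, (1 + B * T * Pn^k)) * T^2) * CA := by ring
      _ ≤ (C₁ * ∏' k : ℕ, (1 + cz * T * Qn^k)) * CA := mul_le_mul_left (hC₁ T hT1) CA
      _ = M2 * ∏' k : ℕ, (1 + cz * T * Qn^k) := by rw [hM2]; ring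
  -- main bound for 0 < t ≤ 1
  have key1 : ∀ t : ℝ, 0 < t → t ≤ 1 → ‖h t‖₊ ≤ M1 * (t.toNNReal)^2 := by
    intro t ht ht1
    set T : ℝ≥0 := t.toNNReal with hT
    have hTc : (T : ℝ) = t := Real.coe_toNNReal _ ht.le
    have hT0 : (0:ℝ≥0) < T := by rw [← NNReal.coe_lt_coe, hTc]; exact ht
    have hT1 : T ≤ 1 := by rw [← NNReal.coe_le_coe, hTc]; exact ht1
    set S : ℝ≥0 := T⁻¹ with hS
    have hS1 : (1:ℝ≥0) ≤ S := by
      rw [hS, one_le_inv_iff₀]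
      exact ⟨hT0, hT1⟩
    have hTnn : ‖((t:ℝ):ℂ)‖₊ = T := by
      rw [Complex.nnnorm_real, ← Real.toNNReal_eq_nnnorm_of_nonneg ht.le]
    have hn1 : ‖qPoch (b' * ↑t) ↑p‖₊ ≤ CB := by
      rw [hpc, hCB]
      refine qPoch_nnnorm_le' _ hPn1 ?_
      rw [nnnorm_mul, hTnn]
      calc ‖b'‖₊ * T ≤ ‖b'‖₊ * 1 := mul_le_mul_right hT1 _
        _ = ‖b'‖₊ := mul_one _
    have hn2 : ‖qPoch (a / ↑t) ↑p‖₊ ≤ ∏' k : ℕ, (1 + A * S * Pn^k) := by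
      rw [hpc]
      refine qPoch_nnnorm_le' _ hPn1 ?_
      rw [nnnorm_div, hTnn, div_eq_mul_inv]
    have hd2 : (∏' k : ℕ, (1 + c2 * S * Qn^k)) ≤ ‖qPoch (-↑q / (z * ↑t)) ↑q‖₊ := by
      rw [hqc, show -((Qn:ℝ):ℂ) / (z * ↑t) = -(((Qn:ℝ):ℂ) / (z * ↑t)) by ring]
      have := le_qPoch_nnnorm' (w := ((Qn:ℝ):ℂ) / (z * ↑t)) hQn1 (x := c2 * S) ?_
      · exact this
      · rw [hQc]
        exact hre2 t ht
    have hd1 : (1:ℝ≥0) ≤ ‖qPoch (-z * ↑t) ↑q‖₊ := by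
      rw [hqc, show -z * (t:ℂ) = -(z * ↑t) by ring]
      refine one_le_qPoch_nnnorm ?_ hQn1
      exact le_trans (by positivity) (hre1 t ht)
    have hY1 : (1:ℝ≥0) ≤ ∏' k : ℕ, (1 + c2 * S * Qn^k) := one_le_prod_nn _ _
    have hnn : ‖h t‖₊ = ‖qPoch (b' * ↑t) ↑p‖₊ * ‖qPoch (a / ↑t) ↑p‖₊ /
        (‖qPoch (-z * ↑t) ↑q‖₊ * ‖qPoch (-↑q / (z * ↑t)) ↑q‖₊) := by
      rw [hh]; simp [nnnorm_div, nnnorm_mul]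
    rw [hnn]
    have step : ‖qPoch (b' * ↑t) ↑p‖₊ * ‖qPoch (a / ↑t) ↑p‖₊ /
        (‖qPoch (-z * ↑t) ↑q‖₊ * ‖qPoch (-↑q / (z * ↑t)) ↑q‖₊) ≤
        (CB * ∏' k : ℕ, (1 + A * S * Pn^k)) / (∏' k : ℕ, (1 + c2 * S * Qn^k)) := by
      gcongr
      calc (∏' k : ℕ, (1 + c2 * S * Qn^k))
            = 1 * (∏' k : ℕ, (1 + c2 * S * Qn^k)) := (one_mul _).symm
          _ ≤ _ := mul_le_mul' hd1 hd2
    refine le_trans step ?_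
    have hT2 : M1 * T^2 = M1 / S^2 := by
      rw [hS, inv_pow, div_inv_eq_mul]
    rw [hT2, div_le_div_iff₀ (lt_of_lt_of_le one_pos hY1)
      (pow_pos (lt_of_lt_of_le one_pos hS1) 2)]
    calc CB * (∏' k : ℕ, (1 + A * S * Pn^k)) * S^2
        = ((∏' k : ℕ, (1 + A * S * Pn^k)) * S^2) * CB := by ring
      _ ≤ (C₂ * ∏' k : ℕ, (1 + c2 * S * Qn^k)) * CB := mul_le_mul_left (hC₂ S hS1) CB
      _ = M1 * ∏' k : ℕ, (1 + c2 * S * Qn^k) := by rw [hM1]; ring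
  -- measurability
  have hmeas : Measurable h := by
    have h1 : Measurable fun t : ℝ => qPoch (b' * ↑t) ↑p :=
      measurable_qPoch_comp hp.le (hpq.trans hq) (measurable_const.mul Complex.measurable_ofReal)
    have h2 : Measurable fun t : ℝ => qPoch (a / ↑t) ↑p :=
      measurable_qPoch_comp hp.le (hpq.trans hq) (measurable_const.div Complex.measurable_ofReal)
    have h3 : Measurable fun t : ℝ => qPoch (-z * ↑t) ↑q :=
      measurable_qPoch_comp hq0.le hq (measurable_const.mul Complex.measurable_ofReal)
    have h4 : Measurable fun t : ℝ => qPoch (-↑q / (z * ↑t)) ↑q :=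
      measurable_qPoch_comp hq0.le hq
        (measurable_const.div (measurable_const.mul Complex.measurable_ofReal))
    exact (h1.mul h2).div (h3.mul h4)
  have hmeas' : Measurable fun t : ℝ => h t / ↑t := hmeas.div Complex.measurable_ofReal
  -- real bounds
  have bound1 : ∀ t : ℝ, 0 < t → t ≤ 1 → ‖h t‖ ≤ (M1:ℝ) := by
    intro t ht ht1
    have := key1 t ht ht1
    have h2 : (‖h t‖₊ : ℝ) ≤ ((M1 * (t.toNNReal)^2 : ℝ≥0) : ℝ) := NNReal.coe_le_coe.2 this
    rw [coe_nnnorm] at h2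
    refine le_trans h2 ?_
    push_cast
    rw [Real.coe_toNNReal _ ht.le]
    have ht2 : t^2 ≤ 1 := by nlinarith
    nlinarith [NNReal.coe_nonneg M1]
  have bound2 : ∀ t : ℝ, 1 ≤ t → ‖h t‖ ≤ (M2:ℝ) * t^(-2:ℝ) := by
    intro t ht1
    have ht : (0:ℝ) < t := lt_of_lt_of_le one_pos ht1
    have := key2 t ht1
    have h2 : (‖h t‖₊ : ℝ) ≤ ((M2 / (t.toNNReal)^2 : ℝ≥0) : ℝ) := NNReal.coe_le_coe.2 this
    rw [coe_nnnorm] at h2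
    refine le_trans h2 ?_
    rw [NNReal.coe_div]
    push_cast
    rw [Real.coe_toNNReal _ ht.le, Real.rpow_neg ht.le, div_eq_mul_inv]
    rw [show ((2:ℝ)) = ((2:ℕ):ℝ) by norm_num, Real.rpow_natCast]
  -- integrability of h and h/t on each piece
  have hIoi : Set.Ioi (0:ℝ) = Set.Ioc 0 1 ∪ Set.Ioi 1 := (Set.Ioc_union_Ioi_eq_Ioi zero_le_one).symm
  have int_h : IntegrableOn h (Set.Ioi 0) := by
    rw [hIoi]
    refine IntegrableOn.union ?_ ?_
    · refine Integrable.mono' (integrableOn_const (C := (M1:ℝ)) (s := Set.Ioc (0:ℝ) 1)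
        (μ := volume) measure_Ioc_lt_top.ne)
        (hmeas.aestronglyMeasurable.restrict) ?_
      refine (ae_restrict_iff' measurableSet_Ioc).2 (ae_of_all _ fun t htm => ?_)
      exact bound1 t htm.1 htm.2
    · refine Integrable.mono' ((integrableOn_Ioi_rpow_of_lt (by norm_num : (-2:ℝ) < -1)
        one_pos).const_mul (M2:ℝ)) (hmeas.aestronglyMeasurable.restrict) ?_
      refine (ae_restrict_iff' measurableSet_Ioi).2 (ae_of_all _ fun t htm => ?_)
      exact bound2 t (le_of_lt htm)
  have int_g : IntegrableOn (fun t => h t / ↑t) (Set.Ioi 0) := by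
    rw [hIoi]
    refine IntegrableOn.union ?_ ?_
    · refine Integrable.mono' (integrableOn_const (C := (M1:ℝ)) (s := Set.Ioc (0:ℝ) 1)
        (μ := volume) measure_Ioc_lt_top.ne)
        (hmeas'.aestronglyMeasurable.restrict) ?_
      refine (ae_restrict_iff' measurableSet_Ioc).2 (ae_of_all _ fun t htm => ?_)
      have ht := htm.1
      rw [norm_div, Complex.norm_real, Real.norm_of_nonneg ht.le]
      have hb := bound1 t htm.1 htm.2
      have h1 : ‖h t‖ / t ≤ (M1:ℝ) * t^2 / t := by
        have := key1 t htm.1 htm.2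
        have h2 : (‖h t‖₊ : ℝ) ≤ ((M1 * (t.toNNReal)^2 : ℝ≥0) : ℝ) := NNReal.coe_le_coe.2 this
        rw [coe_nnnorm] at h2
        push_cast at h2
        rw [Real.coe_toNNReal _ ht.le] at h2
        gcongr
      refine le_trans h1 ?_
      rw [mul_div_assoc]
      have : t^2 / t = t := by field_simp [ht.ne']
      rw [this]
      nlinarith [NNReal.coe_nonneg M1, htm.2, ht]
    · refine Integrable.mono' ((integrableOn_Ioi_rpow_of_lt (by norm_num : (-2:ℝ) < -1)
        one_pos).const_mul (M2:ℝ)) (hmeas'.aestronglyMeasurable.restrict) ?_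
      refine (ae_restrict_iff' measurableSet_Ioi).2 (ae_of_all _ fun t htm => ?_)
      have ht1 : (1:ℝ) ≤ t := le_of_lt htm
      have ht : (0:ℝ) < t := lt_of_lt_of_le one_pos ht1
      rw [norm_div, Complex.norm_real, Real.norm_of_nonneg ht.le]
      calc ‖h t‖ / t ≤ ‖h t‖ / 1 := by gcongr
        _ = ‖h t‖ := div_one _
        _ ≤ (M2:ℝ) * t^(-2:ℝ) := bound2 t ht1
  exact ⟨int_h, int_g⟩

lemma keyD {q : ℝ} (hq0 : 0 < q) (hq1 : q < 1) {w : ℂ} (hw : w ≠ 0) :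
    qPoch (-w) (q:ℂ) * qPoch (-(q:ℂ)/w) (q:ℂ)
      = w * (qPoch (-((q:ℂ)*w)) (q:ℂ) * qPoch (-(q:ℂ)/((q:ℂ)*w)) (q:ℂ)) := by
  have hqc : ((q:ℝ):ℂ) ≠ 0 := by exact_mod_cast hq0.ne'
  have h1 : qPoch (-w) (q:ℂ) = (1 + w) * qPoch (-((q:ℂ)*w)) (q:ℂ) := by
    have h := qPoch_shift (-w) hq0.le hq1
    rw [h, show ((1:ℂ) - -w) = 1 + w by ring, show (-w * (q:ℂ)) = -((q:ℂ)*w) by ring]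
  have h3 : -(q:ℂ)/((q:ℂ)*w) = -(w⁻¹) := by field_simp
  have h2 : qPoch (-(w⁻¹)) (q:ℂ) = (1 + w⁻¹) * qPoch (-(q:ℂ)/w) (q:ℂ) := by
    have h := qPoch_shift (-(w⁻¹)) hq0.le hq1
    rw [h, show ((1:ℂ) - -(w⁻¹)) = 1 + w⁻¹ by ring,
      show (-(w⁻¹) * (q:ℂ)) = -(q:ℂ)/w by ring]
  have hw1 : w * (1 + w⁻¹) = 1 + w := by field_simp; ring
  rw [h1, h3, h2, ← hw1]
  ring

theorem stmt_2 (p q : ℝ) (hp : 0 < p) (hpq : p < q) (hq : q < 1)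
    (a b z : ℂ) (hz : 0 < z.re) :
    f p q a b z = f p q a (b * (p : ℂ)) z - b * f p q a (b * (p : ℂ)) ((q : ℂ) * z) := by
  have hq0 : 0 < q := hp.trans hpq
  have hp1 : p < 1 := hpq.trans hq
  have hz0 : z ≠ 0 := fun h => by simp [h] at hz
  obtain ⟨int_h, int_g⟩ := integrable_main p q hp hpq hq a (b * ↑p) z hz
  set N : ℝ → ℂ := fun t : ℝ => qPoch (b * ↑p * ↑t) ↑p * qPoch (a / ↑t) ↑p with hN
  set D : ℝ → ℂ := fun t : ℝ => qPoch (-z * ↑t) ↑q * qPoch (-↑q / (z * ↑t)) ↑q with hD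
  set D' : ℝ → ℂ := fun t : ℝ =>
    qPoch (-(↑q * z) * ↑t) ↑q * qPoch (-↑q / (↑q * z * ↑t)) ↑q with hD'
  have E1 : (∫ t in Set.Ioi (0:ℝ),
        (qPoch (b * ↑t) ↑p * qPoch (a / ↑t) ↑p) / D t / ↑t)
      = ∫ t in Set.Ioi (0:ℝ), (N t / D t / ↑t - b * (N t / D t)) := by
    refine setIntegral_congr_fun measurableSet_Ioi fun t ht => ?_
    have ht0 : (t:ℂ) ≠ 0 := Complex.ofReal_ne_zero.mpr (ne_of_gt ht)
    have hshift : qPoch (b * ↑t) ↑p = (1 - b * ↑t) * qPoch (b * ↑p * ↑t) ↑p := by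
      have h := qPoch_shift (b * ↑t) hp.le hp1
      rw [h, show ((b * (t:ℂ)) * (p:ℂ)) = b * ↑p * ↑t by ring]
    have alg : ∀ X : ℂ, ((1 - b*(t:ℂ)) * X)/(t:ℂ) = X/(t:ℂ) - b*X := by
      intro X
      field_simp
    rw [hshift, mul_assoc, mul_div_assoc]
    exact alg _
  have E2 : (∫ t in Set.Ioi (0:ℝ), (N t / D t / ↑t - b * (N t / D t)))
      = (∫ t in Set.Ioi (0:ℝ), N t / D t / ↑t) - b * ∫ t in Set.Ioi (0:ℝ), N t / D t := by
    rw [integral_sub int_g (int_h.const_mul b), integral_const_mul]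
  have E3 : (∫ t in Set.Ioi (0:ℝ), N t / D' t / ↑t)
      = z * ∫ t in Set.Ioi (0:ℝ), N t / D t := by
    rw [← integral_const_mul]
    refine setIntegral_congr_fun measurableSet_Ioi fun t ht => ?_
    have ht0 : (t:ℂ) ≠ 0 := Complex.ofReal_ne_zero.mpr (ne_of_gt ht)
    have hDrel : D t = (z * ↑t) * D' t := by
      have h := keyD hq0 hq (w := z * (t:ℂ)) (mul_ne_zero hz0 ht0)
      rw [hD, hD']
      simp only []
      rw [show -z * (t:ℂ) = -(z * ↑t) by ring,
        show -(↑q * z) * (t:ℂ) = -((q:ℂ) * (z * ↑t)) by ring,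
        show (↑q * z * (t:ℂ)) = (q:ℂ) * (z * ↑t) by ring]
      exact h
    rcases eq_or_ne (D' t) 0 with h0 | h0
    · rw [hDrel, h0]
      simp
    · rw [hDrel]
      field_simp
  have hPrel : qPoch (-z) ↑q * qPoch (-↑q / z) ↑q
      = z * (qPoch (-(↑q * z)) ↑q * qPoch (-↑q / (↑q * z)) ↑q) := keyD hq0 hq hz0
  unfold f
  rw [E1, E2, E3, hPrel]
  ring
end

section
/- Let 0 < p < q < 1 be real, let a, b be complex numbers, and let z be a complex number with Re z > 0 (so that also Re(q/z) > 0). Define f(a, b, z) = ((-z, -q/z; q)_∞ / log(1/q)) · ∫_0^∞ (b t, a/t; p)_∞ / ((-z t, -q/(z t); q)_∞) dt/t. Then f(a, b, z) = f(b, a, q/z). -/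
open MeasureTheory

/-- Substitution `t ↦ t⁻¹` on `(0, ∞)`. -/
lemma integral_inv_Ioi (g : ℝ → ℂ) :
    (∫ x in Set.Ioi (0 : ℝ), ((x ^ 2)⁻¹ : ℝ) • g x⁻¹) = ∫ x in Set.Ioi (0 : ℝ), g x := by
  have himg : (fun x : ℝ => x⁻¹) '' Set.Ioi 0 = Set.Ioi 0 := by
    ext x
    constructor
    · rintro ⟨y, hy, rfl⟩
      exact Set.mem_Ioi.2 (inv_pos.2 (Set.mem_Ioi.1 hy))
    · intro hx
      exact ⟨x⁻¹, Set.mem_Ioi.2 (inv_pos.2 (Set.mem_Ioi.1 hx)), inv_inv x⟩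
  have hderiv : ∀ x ∈ Set.Ioi (0 : ℝ),
      HasDerivWithinAt (fun t : ℝ => t⁻¹) (-(x ^ 2)⁻¹) (Set.Ioi 0) x :=
    fun x hx => (hasDerivAt_inv (ne_of_gt hx)).hasDerivWithinAt
  have hinj : Set.InjOn (fun t : ℝ => t⁻¹) (Set.Ioi 0) := inv_injective.injOn
  have := MeasureTheory.integral_image_eq_integral_abs_deriv_smul
    (measurableSet_Ioi (a := (0:ℝ))) hderiv hinj g
  rw [himg] at this
  rw [this]
  refine setIntegral_congr_fun measurableSet_Ioi fun x hx => ?_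
  simp [abs_of_nonneg (inv_nonneg.2 (sq_nonneg x))]

theorem stmt_4 (p q : ℝ) (hp : 0 < p) (hpq : p < q) (hq : q < 1)
    (a b z : ℂ) (hz : 0 < z.re) :
    f p q a b z = f p q b a ((q : ℂ) / z) := by
  have hz0 : z ≠ 0 := fun h => by simp [h] at hz
  have hq0 : (q : ℂ) ≠ 0 := by
    exact_mod_cast ne_of_gt (hp.trans hpq)
  unfold f
  have harg : -(q : ℂ) / ((q : ℂ) / z) = -z := by field_simp
  have harg2 : -(q : ℂ) / z = -((q : ℂ) / z) := neg_div z (q : ℂ)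
  rw [harg, harg2, mul_comm (qPoch (-((q:ℂ)/z)) (q:ℂ)) (qPoch (-z) (q:ℂ))]
  congr 1
  rw [← integral_inv_Ioi (fun t : ℝ =>
      (qPoch (b * (t : ℂ)) p * qPoch (a / (t : ℂ)) p) /
        (qPoch (-z * (t : ℂ)) q * qPoch (-(q : ℂ) / (z * (t : ℂ))) q) / (t : ℂ))]
  refine setIntegral_congr_fun measurableSet_Ioi fun t ht => ?_
  have ht0 : (t : ℝ) ≠ 0 := ne_of_gt ht
  have htC : (t : ℂ) ≠ 0 := by exact_mod_cast ht0
  have h1 : a * (t : ℂ) = a / ((t⁻¹ : ℝ) : ℂ) := by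
    push_cast; field_simp
  have h2 : b / (t : ℂ) = b * ((t⁻¹ : ℝ) : ℂ) := by
    push_cast; field_simp
  have h3 : -((q : ℂ) / z) * (t : ℂ) = -(q : ℂ) / (z * ((t⁻¹ : ℝ) : ℂ)) := by
    push_cast; field_simp
  have h4 : -(q : ℂ) / ((q : ℂ) / z * (t : ℂ)) = -z * ((t⁻¹ : ℝ) : ℂ) := by
    push_cast; field_simp
  rw [← h1, ← h2, ← h3, ← h4]
  set A := qPoch (a * (t : ℂ)) (p : ℂ) with hA
  set B := qPoch (b / (t : ℂ)) (p : ℂ) with hB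
  set C := qPoch (-((q : ℂ) / z) * (t : ℂ)) (q : ℂ) with hC
  set D := qPoch (-(q : ℂ) / ((q : ℂ) / z * (t : ℂ))) (q : ℂ) with hD
  rw [Complex.real_smul]
  push_cast
  field_simp
end

section
/- Let 0 < p < 1 and 0 < α < 1 be real, and let a_1, a_2, b_1, b_2, θ be real numbers. Then ∑_{n=-∞}^{∞} [a_1 choose b_1 + α n]_p · [a_2 choose b_2 + α n]_p · p^{α n(n-1) + θ n} = p^θ · ∑_{n=-∞}^{∞} [a_1 choose b_1 - θ + α n]_p · [a_2 choose b_2 - θ + α n]_p · p^{α n(n-1) - θ n}. -/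
open Real Filter Finset Topology

set_option maxHeartbeats 2000000

noncomputable def eul (q : ℝ) : ℕ → ℝ
  | 0 => 1
  | j + 1 => eul q j * (-(q ^ j)) / (1 - q ^ (j + 1))

noncomputable def Dq (q : ℝ) : ℝ := Real.exp (-(q / ((1 - q) * (1 - q))))

lemma Dq_pos (q : ℝ) : 0 < Dq q := Real.exp_pos _

lemma exp_neg_le_one_sub {a c : ℝ} (ha : 0 ≤ a) (hac : a ≤ c) (hc : c < 1) :
    Real.exp (-(a / (1 - c))) ≤ 1 - a := by
  have h1c : 0 < 1 - c := by linarith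
  set t := a / (1 - c) with ht
  have ht0 : 0 ≤ t := div_nonneg ha h1c.le
  have hpos : 0 < 1 + t := by linarith
  have h1 : 1 + t ≤ Real.exp t := by linarith [Real.add_one_le_exp t]
  have expand : (1 - a) * (1 + a / (1 - c)) = 1 + a * (c - a) / (1 - c) := by
    field_simp; ring
  have key : 1 ≤ (1 - a) * (1 + t) := by
    rw [ht, expand]
    have : 0 ≤ a * (c - a) / (1 - c) := by
      apply div_nonneg _ h1c.le
      exact mul_nonneg ha (by linarith)
    linarith
  calc Real.exp (-t) = (Real.exp t)⁻¹ := Real.exp_neg t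
    _ ≤ (1 + t)⁻¹ := by
        apply inv_anti₀ hpos h1
    _ = 1 / (1 + t) := (one_div _).symm
    _ ≤ 1 - a := by rw [div_le_iff₀ hpos]; linarith

section euler

variable {q : ℝ} (hq0 : 0 < q) (hq1 : q < 1)

include hq0 hq1

lemma one_sub_q_pow_pos (j : ℕ) : 0 < 1 - q ^ (j + 1) := by
  have : q ^ (j + 1) < 1 := pow_lt_one₀ hq0.le hq1 (Nat.succ_ne_zero j)
  linarith

lemma Dq_le_prod (j : ℕ) : Dq q ≤ ∏ i ∈ range j, (1 - q ^ (i + 1)) := by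
  have h1q : 0 < 1 - q := by linarith
  have hgeom : ∑ i ∈ range j, q ^ (i + 1) ≤ q / (1 - q) := by
    have h1 : ∑ i ∈ range j, q ^ (i + 1) = (∑ i ∈ range j, q ^ i) * q := by
      rw [Finset.sum_mul]
      exact Finset.sum_congr rfl fun i _ => (pow_succ q i).symm
    rw [h1, geom_sum_eq (by linarith : q ≠ 1) j]
    have h2 : (q ^ j - 1) / (q - 1) = (1 - q ^ j) / (1 - q) := by
      rw [← neg_div_neg_eq]; ring_nf
    rw [h2, div_mul_eq_mul_div, div_le_div_iff₀ h1q h1q]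
    have hqj : 0 ≤ q ^ j := pow_nonneg hq0.le j
    nlinarith [mul_nonneg (mul_nonneg hqj hq0.le) h1q.le]
  calc Dq q ≤ Real.exp (-(∑ i ∈ range j, q ^ (i + 1) / (1 - q))) := by
        apply Real.exp_le_exp.2
        rw [neg_le_neg_iff, ← Finset.sum_div, div_le_div_iff₀ h1q (by positivity)]
        have h4 := mul_le_mul_of_nonneg_right hgeom (mul_nonneg h1q.le h1q.le)
        have h5 : q / (1 - q) * ((1 - q) * (1 - q)) = q * (1 - q) := by field_simp
        nlinarith [h4, h5]
    _ = ∏ i ∈ range j, Real.exp (-(q ^ (i + 1) / (1 - q))) := by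
        rw [← Real.exp_sum]
        congr 1
        rw [← Finset.sum_neg_distrib]
    _ ≤ ∏ i ∈ range j, (1 - q ^ (i + 1)) := by
        apply Finset.prod_le_prod (fun i _ => (Real.exp_pos _).le)
        intro i _
        have hle : q ^ (i + 1) ≤ q := by
          simpa using pow_le_pow_of_le_one hq0.le hq1.le
            (Nat.one_le_iff_ne_zero.2 (Nat.succ_ne_zero i))
        exact exp_neg_le_one_sub (pow_nonneg hq0.le _) hle hq1

lemma abs_eul_mul_prod (j : ℕ) :
    |eul q j| * ∏ i ∈ range j, (1 - q ^ (i + 1)) = ∏ i ∈ range j, q ^ i := by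
  induction j with
  | zero => simp [eul]
  | succ j ih =>
      have hpos := one_sub_q_pow_pos hq0 hq1 j
      have habs : |eul q (j + 1)| = |eul q j| * q ^ j / (1 - q ^ (j + 1)) := by
        rw [eul, abs_div, abs_mul, abs_neg, abs_of_pos hpos,
          abs_of_nonneg (pow_nonneg hq0.le j)]
      rw [habs, Finset.prod_range_succ, Finset.prod_range_succ, ← ih]
      field_simp

lemma abs_eul_le (j : ℕ) : |eul q j| ≤ (Dq q)⁻¹ * ∏ i ∈ range j, q ^ i := by
  have hP : Dq q ≤ ∏ i ∈ range j, (1 - q ^ (i + 1)) := Dq_le_prod hq0 hq1 j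
  have hPpos : 0 < ∏ i ∈ range j, (1 - q ^ (i + 1)) := lt_of_lt_of_le (Dq_pos q) hP
  have h := abs_eul_mul_prod hq0 hq1 j
  have h2 : |eul q j| = (∏ i ∈ range j, q ^ i) / ∏ i ∈ range j, (1 - q ^ (i + 1)) := by
    field_simp at h ⊢
    linarith [h]
  rw [h2, inv_mul_eq_div]
  apply div_le_div_of_nonneg_left (Finset.prod_nonneg fun i _ => pow_nonneg hq0.le i)
    (Dq_pos q) hP

lemma prod_q_pow_eq (j : ℕ) : ∏ i ∈ range j, q ^ i = q ^ ((((j : ℝ)) ^ 2 - j) / 2) := by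
  rw [Finset.prod_pow_eq_pow_sum]
  rw [← Real.rpow_natCast q (∑ i ∈ range j, i)]
  congr 1
  have h := Finset.sum_range_id_mul_two j
  have h2 : ((∑ i ∈ range j, i : ℕ) : ℝ) * 2 = (j : ℝ) ^ 2 - j := by
    cases j with
    | zero => simp
    | succ j =>
        have h' : (∑ i ∈ range (j + 1), i) * 2 = (j + 1) * j := by
          rw [Finset.sum_range_id_mul_two]; simp
        have hc := congrArg (Nat.cast : ℕ → ℝ) h'
        push_cast at hc ⊢
        nlinarith [hc]
  linarith

end euler
lemma eul_succ (q : ℝ) (j : ℕ) : eul q (j + 1) = eul q j * (-(q ^ j)) / (1 - q ^ (j + 1)) := rfl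

lemma abs_log_one_sub_le {x : ℝ} (hx : |x| ≤ 1 / 2) : |Real.log (1 - x)| ≤ 2 * |x| := by
  have hx1 : x ≤ 1 / 2 := (abs_le.1 hx).2
  have hx2 : -(1 / 2) ≤ x := (abs_le.1 hx).1
  have hpos : 0 < 1 - x := by linarith
  rw [abs_le]
  constructor
  · have h1 : Real.log (1 - x)⁻¹ ≤ (1 - x)⁻¹ - 1 := Real.log_le_sub_one_of_pos (by positivity)
    have h2 : Real.log (1 - x)⁻¹ = -Real.log (1 - x) := Real.log_inv _
    have h3 : (1 - x)⁻¹ - 1 = x / (1 - x) := by field_simp; ring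
    have h4 : x / (1 - x) ≤ 2 * |x| := by
      rw [div_le_iff₀ hpos]
      nlinarith [le_abs_self x, abs_nonneg x]
    linarith
  · have h5 : Real.log (1 - x) ≤ (1 - x) - 1 := Real.log_le_sub_one_of_pos hpos
    nlinarith [neg_abs_le x, abs_nonneg x]

section euler2

variable {q : ℝ} (hq0 : 0 < q) (hq1 : q < 1)

include hq0 hq1

lemma abs_eul_succ (j : ℕ) :
    |eul q (j + 1)| = |eul q j| * q ^ j / (1 - q ^ (j + 1)) := by
  have hpos := one_sub_q_pow_pos hq0 hq1 j
  rw [eul_succ, abs_div, abs_mul, abs_neg, abs_of_pos hpos,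
    abs_of_nonneg (pow_nonneg hq0.le j)]

lemma summable_abs_eul (r : ℝ) (hr : 0 ≤ r) :
    Summable fun j => |eul q j| * r ^ j := by
  have h1q : 0 < 1 - q := by linarith
  apply summable_of_ratio_norm_eventually_le (r := 1 / 2) (by norm_num)
  have htend : Tendsto (fun j : ℕ => q ^ j * r) atTop (𝓝 0) := by
    simpa using (tendsto_pow_atTop_nhds_zero_of_lt_one hq0.le hq1).mul_const r
  have hev : ∀ᶠ j : ℕ in atTop, q ^ j * r ≤ (1 - q) / 2 :=
    htend.eventually_le_const (by positivity)
  filter_upwards [hev] with j hj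
  have hpos := one_sub_q_pow_pos hq0 hq1 j
  have h1 : |eul q (j + 1)| * r ^ (j + 1) = (|eul q j| * r ^ j) * (q ^ j * r / (1 - q ^ (j + 1))) := by
    rw [abs_eul_succ hq0 hq1 j, pow_succ]
    field_simp
    ring
  have h2 : q ^ j * r / (1 - q ^ (j + 1)) ≤ q ^ j * r / (1 - q) := by
    apply div_le_div_of_nonneg_left (by positivity) h1q
    have : q ^ (j + 1) ≤ q := by
      simpa using pow_le_pow_of_le_one hq0.le hq1.le
        (Nat.one_le_iff_ne_zero.2 (Nat.succ_ne_zero j))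
    linarith
  have h3 : q ^ j * r / (1 - q) ≤ 1 / 2 := by
    rw [div_le_div_iff₀ h1q (by norm_num)] at *
    linarith
  have hnn : (0 : ℝ) ≤ |eul q j| * r ^ j := by positivity
  rw [Real.norm_eq_abs, Real.norm_eq_abs, abs_of_nonneg (by positivity), abs_of_nonneg hnn, h1]
  calc (|eul q j| * r ^ j) * (q ^ j * r / (1 - q ^ (j + 1)))
      ≤ (|eul q j| * r ^ j) * (1 / 2) := by
        apply mul_le_mul_of_nonneg_left _ hnn
        linarith
    _ = 1 / 2 * (|eul q j| * r ^ j) := by ring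

lemma summable_eul_norm (y : ℝ) : Summable fun j => ‖eul q j * y ^ j‖ := by
  apply (summable_abs_eul hq0 hq1 |y| (abs_nonneg y)).congr
  intro j
  rw [Real.norm_eq_abs, abs_mul, abs_pow]

lemma summable_eul_mul (y : ℝ) : Summable fun j => eul q j * y ^ j := by
  apply Summable.of_abs
  apply (summable_eul_norm hq0 hq1 y).congr
  intro j
  rw [Real.norm_eq_abs]

end euler2

noncomputable def eulS (q z : ℝ) : ℝ := ∑' j, eul q j * z ^ j

section euler3

variable {q : ℝ} (hq0 : 0 < q) (hq1 : q < 1)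

include hq0 hq1

lemma eulS_funEq (z : ℝ) : eulS q z = (1 - z) * eulS q (q * z) := by
  have hs : Summable fun j => eul q j * (q * z) ^ j := summable_eul_mul hq0 hq1 _
  have hsz : Summable fun j => eul q j * z ^ j := summable_eul_mul hq0 hq1 z
  have key : ∀ j : ℕ, eul q (j + 1) * q ^ (j + 1) - eul q j * q ^ j = eul q (j + 1) := by
    intro j
    have hne := (one_sub_q_pow_pos hq0 hq1 j).ne'
    rw [eul_succ]
    field_simp
    ring
  have hA : eulS q (q * z) = 1 + ∑' j, eul q (j + 1) * (q * z) ^ (j + 1) := by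
    rw [eulS, Summable.tsum_eq_zero_add hs]
    simp [eul]
  have hB : z * eulS q (q * z) = ∑' j, eul q j * q ^ j * z ^ (j + 1) := by
    rw [eulS, ← tsum_mul_left]
    apply tsum_congr
    intro j
    rw [mul_pow]
    ring
  have hC : eulS q z = 1 + ∑' j, eul q (j + 1) * z ^ (j + 1) := by
    rw [eulS, Summable.tsum_eq_zero_add hsz]
    simp [eul]
  have hsub : Summable fun j => eul q (j + 1) * (q * z) ^ (j + 1) := (summable_nat_add_iff 1).2 hs
  have hsub2 : Summable fun j => eul q j * q ^ j * z ^ (j + 1) := by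
    apply (hs.mul_right z).congr
    intro j
    rw [mul_pow]
    ring
  symm
  calc (1 - z) * eulS q (q * z) = eulS q (q * z) - z * eulS q (q * z) := by ring
    _ = (1 + ∑' j, eul q (j + 1) * (q * z) ^ (j + 1)) - ∑' j, eul q j * q ^ j * z ^ (j + 1) := by
        rw [hB, hA]
    _ = 1 + ∑' j, (eul q (j + 1) * (q * z) ^ (j + 1) - eul q j * q ^ j * z ^ (j + 1)) := by
        rw [Summable.tsum_sub hsub hsub2]
        ring
    _ = 1 + ∑' j, eul q (j + 1) * z ^ (j + 1) := by
        congr 1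
        apply tsum_congr
        intro j
        rw [mul_pow]
        linear_combination z ^ (j + 1) * key j
    _ = eulS q z := hC.symm

lemma eulS_iter (z : ℝ) (N : ℕ) :
    eulS q z = (∏ k ∈ range N, (1 - z * q ^ k)) * eulS q (q ^ N * z) := by
  induction N with
  | zero => simp
  | succ N ih =>
      have hqz : q * (q ^ N * z) = q ^ (N + 1) * z := by ring
      rw [ih, eulS_funEq hq0 hq1 (q ^ N * z), hqz, Finset.prod_range_succ]
      ring

lemma eulS_tendsto (z : ℝ) : Tendsto (fun N => eulS q (q ^ N * z)) atTop (𝓝 1) := by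
  have hz1 : (0 : ℝ) < |z| + 1 := by positivity
  have hCs : Summable fun j => |eul q (j + 1)| * (|z| + 1) ^ j := by
    have h := summable_abs_eul hq0 hq1 (|z| + 1) (by positivity)
    have h2 := (summable_nat_add_iff 1).2 h
    apply (h2.div_const (|z| + 1)).congr
    intro j
    rw [pow_succ]
    field_simp
  set C := ∑' j, |eul q (j + 1)| * (|z| + 1) ^ j with hCdef
  have hbound : ∀ N : ℕ, ‖eulS q (q ^ N * z) - 1‖ ≤ q ^ N * (|z| * C) := by
    intro N
    set w := q ^ N * z with hw
    have hqN : 0 < q ^ N := pow_pos hq0 N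
    have hqN1 : q ^ N ≤ 1 := pow_le_one₀ hq0.le hq1.le
    have hwabs : |w| = q ^ N * |z| := by
      rw [hw, abs_mul, abs_pow, abs_of_pos hq0]
    have hwz : |w| ≤ |z| := by
      rw [hwabs]
      nlinarith [abs_nonneg z]
    have hsw : Summable fun j => eul q j * w ^ j := summable_eul_mul hq0 hq1 w
    have hE : eulS q w - 1 = ∑' j, eul q (j + 1) * w ^ (j + 1) := by
      rw [eulS, Summable.tsum_eq_zero_add hsw]
      simp [eul]
    rw [hE]
    have hsw2 : Summable fun j => ‖eul q (j + 1) * w ^ (j + 1)‖ := by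
      have := (summable_nat_add_iff 1).2 (summable_eul_norm hq0 hq1 w)
      exact this
    calc ‖∑' j, eul q (j + 1) * w ^ (j + 1)‖ ≤ ∑' j, ‖eul q (j + 1) * w ^ (j + 1)‖ :=
          norm_tsum_le_tsum_norm hsw2
      _ ≤ ∑' j, |eul q (j + 1)| * (|z| + 1) ^ j * |w| := by
          apply Summable.tsum_le_tsum _ hsw2 (hCs.mul_right |w|)
          intro j
          rw [Real.norm_eq_abs, abs_mul, abs_pow, pow_succ]
          have h1 : |w| ^ j ≤ (|z| + 1) ^ j :=
            pow_le_pow_left₀ (abs_nonneg w) (by linarith) j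
          rw [← mul_assoc]
          gcongr
      _ = C * |w| := by rw [tsum_mul_right]
      _ = q ^ N * (|z| * C) := by rw [hwabs]; ring
  have htend0 : Tendsto (fun N : ℕ => q ^ N * (|z| * C)) atTop (𝓝 0) := by
    simpa using (tendsto_pow_atTop_nhds_zero_of_lt_one hq0.le hq1).mul_const (|z| * C)
  have h0 := squeeze_zero_norm hbound htend0
  have h1 := h0.add_const 1
  simpa using h1

lemma mult_one_sub (z : ℝ) : Multipliable fun k => 1 - z * q ^ k := by
  obtain ⟨K, hK⟩ : ∃ K : ℕ, ∀ k ≥ K, |z| * q ^ k ≤ 1 / 2 := by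
    have ht : Tendsto (fun k : ℕ => |z| * q ^ k) atTop (𝓝 0) := by
      simpa using (tendsto_pow_atTop_nhds_zero_of_lt_one hq0.le hq1).const_mul |z|
    exact eventually_atTop.1 (ht.eventually_le_const (by norm_num))
  apply Multipliable.comp_nat_add (k := K)
  have habs : ∀ n : ℕ, |z * q ^ (n + K)| ≤ 1 / 2 := by
    intro n
    rw [abs_mul, abs_pow, abs_of_pos hq0]
    calc |z| * q ^ (n + K) = |z| * q ^ K * q ^ n := by rw [pow_add]; ring
      _ ≤ |z| * q ^ K * 1 := by
          apply mul_le_mul_of_nonneg_left (pow_le_one₀ hq0.le hq1.le)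
          positivity
      _ ≤ 1 / 2 := by
          rw [mul_one]
          exact hK K le_rfl
  have hpos : ∀ n : ℕ, 0 < 1 - z * q ^ (n + K) := by
    intro n
    have := habs n
    have h2 := (abs_le.1 this).2
    linarith
  have hlog : Summable fun n => Real.log (1 - z * q ^ (n + K)) := by
    apply Summable.of_abs
    refine Summable.of_nonneg_of_le (fun n => abs_nonneg _) ?_
      ((summable_geometric_of_lt_one hq0.le hq1).mul_left (2 * (|z| * q ^ K)))
    intro n
    have h := abs_log_one_sub_le (habs n)
    calc |Real.log (1 - z * q ^ (n + K))| ≤ 2 * |z * q ^ (n + K)| := h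
      _ = 2 * (|z| * q ^ K) * q ^ n := by
          rw [abs_mul, abs_pow, abs_of_pos hq0, pow_add]
          ring
  exact Real.multipliable_of_summable_log hpos hlog

theorem qPochR_eq_eulS (z : ℝ) : (∏' k : ℕ, (1 - z * q ^ k)) = eulS q z := by
  have t1 := Multipliable.tendsto_prod_tprod_nat (mult_one_sub hq0 hq1 z)
  have t2 := t1.mul (eulS_tendsto hq0 hq1 z)
  rw [mul_one] at t2
  have t3 : Tendsto (fun N => (∏ k ∈ range N, (1 - z * q ^ k)) * eulS q (q ^ N * z)) atTop
      (𝓝 (eulS q z)) := by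
    have he : (fun N => (∏ k ∈ range N, (1 - z * q ^ k)) * eulS q (q ^ N * z))
        = fun _ => eulS q z := funext fun N => (eulS_iter hq0 hq1 z N).symm
    rw [he]
    exact tendsto_const_nhds
  exact tendsto_nhds_unique t2 t3

lemma qPochR_qq_pos : 0 < ∏' k : ℕ, (1 - q * q ^ k) := by
  have t1 := Multipliable.tendsto_prod_tprod_nat (mult_one_sub hq0 hq1 q)
  apply lt_of_lt_of_le (Dq_pos q)
  apply ge_of_tendsto t1
  filter_upwards with N
  calc Dq q ≤ ∏ i ∈ range N, (1 - q ^ (i + 1)) := Dq_le_prod hq0 hq1 N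
    _ = ∏ k ∈ range N, (1 - q * q ^ k) := by
        apply Finset.prod_congr rfl
        intro i _
        rw [pow_succ']

end euler3
lemma lin_quad {c lam t : ℝ} (hc : 0 < c) (ht : 0 ≤ t) :
    t ≤ c*t^2 + lam*t + (|lam|+1)^2/(4*c) := by
  have h4c : 0 < 4*c := by linarith
  have hm : 4*c*(-(lam*t)) ≤ 4*c*(|lam| * t) := by
    apply mul_le_mul_of_nonneg_left _ h4c.le
    calc -(lam*t) ≤ |lam*t| := neg_le_abs _
      _ = |lam| * t := by rw [abs_mul, abs_of_nonneg ht]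
  have key : (t - c*t^2 - lam*t) * (4*c) ≤ (|lam|+1)^2 := by
    nlinarith [sq_nonneg (2*c*t - (|lam|+1)), hm, abs_nonneg lam, ht, hc.le]
  have h2 := (le_div_iff₀ h4c).2 key
  linarith

lemma lin_quad_abs {c lam t : ℝ} (hc : 0 < c) :
    |t| ≤ c*t^2 + lam*t + (|lam|+1)^2/(4*c) := by
  have h := lin_quad (lam := -|lam|) hc (abs_nonneg t)
  have h1 : -|lam| * |t| ≤ lam * t := by
    calc -|lam| * |t| = -(|lam| * |t|) := by ring
      _ = -|lam * t| := by rw [abs_mul]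
      _ ≤ lam * t := neg_abs_le _
  have h2 : |(-|lam|)| = |lam| := by rw [abs_neg, abs_abs]
  rw [h2] at h
  have h3 : c * |t|^2 = c * t^2 := by rw [sq_abs]
  linarith

lemma quad_aux {α x k₁ k₂ k₃ k₄ : ℝ} (hα : 0 < α) (hα1 : α < 1) (hx : 0 ≤ x)
    (h1 : 0 ≤ k₁) (h2 : 0 ≤ k₂) (h3 : 0 ≤ k₃) (h4 : 0 ≤ k₄) :
    α * (1 - α) / 4 * (x^2 + (k₁^2 + k₂^2 + k₃^2 + k₄^2)) ≤
      α * x^2 + α * x * (k₁ + k₂ - k₃ - k₄) + (k₁^2 + k₂^2 + k₃^2 + k₄^2) / 2 := by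
  have ha1 : (0:ℝ) < 1 + α := by linarith
  nlinarith [mul_nonneg (by linarith : (0:ℝ) ≤ 2*α) (sq_nonneg ((1+α)*x - (k₃+k₄))),
    mul_nonneg (mul_nonneg (by positivity : (0:ℝ) ≤ 4*(1+α)*α) hx) h1,
    mul_nonneg (mul_nonneg (by positivity : (0:ℝ) ≤ 4*(1+α)*α) hx) h2,
    mul_nonneg (mul_nonneg (mul_nonneg hα.le ha1.le) (show (0:ℝ) ≤ 1-α by linarith)) (sq_nonneg x),
    mul_nonneg (by nlinarith [pow_nonneg hα.le 3] : (0:ℝ) ≤ 2+α+α^3) (sq_nonneg k₁),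
    mul_nonneg (by nlinarith [pow_nonneg hα.le 3] : (0:ℝ) ≤ 2+α+α^3) (sq_nonneg k₂),
    mul_nonneg (mul_nonneg (sq_nonneg (1-α)) (show (0:ℝ) ≤ α+2 by linarith)) (sq_nonneg k₃),
    mul_nonneg (mul_nonneg (sq_nonneg (1-α)) (show (0:ℝ) ≤ α+2 by linarith)) (sq_nonneg k₄),
    mul_nonneg (by linarith : (0:ℝ) ≤ 2*α) (sq_nonneg (k₃-k₄)), ha1]

lemma quad_main {α x k₁ k₂ k₃ k₄ : ℝ} (hα : 0 < α) (hα1 : α < 1)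
    (h1 : 0 ≤ k₁) (h2 : 0 ≤ k₂) (h3 : 0 ≤ k₃) (h4 : 0 ≤ k₄) :
    α * (1 - α) / 4 * (x^2 + (k₁^2 + k₂^2 + k₃^2 + k₄^2)) ≤
      α * x^2 + α * x * (k₁ + k₂ - k₃ - k₄) + (k₁^2 + k₂^2 + k₃^2 + k₄^2) / 2 := by
  rcases le_total 0 x with hx | hx
  · exact quad_aux hα hα1 hx h1 h2 h3 h4
  · have h := quad_aux hα hα1 (x := -x) (k₁ := k₃) (k₂ := k₄) (k₃ := k₁) (k₄ := k₂)
      (by linarith) h3 h4 h1 h2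
    nlinarith [h]
/-- The infinite q-Pochhammer symbol `(a; q)_∞ = ∏_{k=0}^∞ (1 - a q^k)` (real version). -/
noncomputable def qPochR (a q : ℝ) : ℝ := ∏' k : ℕ, (1 - a * q ^ k)

/-- The q-Gamma function `Γ_q(x) = ((q;q)_∞ / (q^x;q)_∞) (1-q)^{1-x}`. -/
noncomputable def qGammaR (q x : ℝ) : ℝ := qPochR q q / qPochR (q ^ x) q * (1 - q) ^ (1 - x)

/-- The q-binomial coefficient `[a choose b]_q = Γ_q(a+1) / (Γ_q(b+1) Γ_q(a-b+1))`. -/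
noncomputable def qBinomR (q a b : ℝ) : ℝ :=
  qGammaR q (a + 1) / (qGammaR q (b + 1) * qGammaR q (a - b + 1))

section assembly

variable {p α : ℝ}

/-- the master family indexed by `ℤ × ℕ⁴`. -/
noncomputable def mega (p α θ c₁ c₂ c₃ c₄ : ℝ) (x : ℤ × ((ℕ × ℕ) × (ℕ × ℕ))) : ℝ :=
  eul p x.2.1.1 * eul p x.2.1.2 * eul p x.2.2.1 * eul p x.2.2.2 *
    p ^ ((c₁ + α * x.1) * x.2.1.1 + (c₂ + α * x.1) * x.2.1.2
        + (c₃ - α * x.1) * x.2.2.1 + (c₄ - α * x.1) * x.2.2.2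
        + α * x.1 * (x.1 - 1) + θ * x.1)

lemma rpow_shuffle {p A B e1 e2 th : ℝ} (hp0 : 0 < p) (hAB : A = B) (h : e1 = th + e2) :
    A * p ^ e1 = p ^ th * (B * p ^ e2) := by
  rw [h, Real.rpow_add hp0, hAB]; ring

lemma mega_shift (hp0 : 0 < p) (θ c₁ c₂ c₃ c₄ : ℝ) :
    ∑' x, mega p α θ c₁ c₂ c₃ c₄ x
      = p ^ θ * ∑' x, mega p α (-θ) (c₁ - θ) (c₂ - θ) (c₃ + θ) (c₄ + θ) x := by
  have hinv : Function.Involutive (fun x : ℤ × ((ℕ × ℕ) × (ℕ × ℕ)) =>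
      (1 - ((x.2.1.1 : ℤ) + x.2.1.2 - x.2.2.1 - x.2.2.2) - x.1, x.2)) := by
    rintro ⟨n, k⟩
    refine Prod.ext ?_ rfl
    show 1 - _ - (1 - _ - n) = n
    ring
  have heq := Equiv.tsum_eq hinv.toPerm (mega p α θ c₁ c₂ c₃ c₄)
  rw [← heq, ← tsum_mul_left]
  apply tsum_congr
  rintro ⟨n, ⟨⟨k₁, k₂⟩, ⟨k₃, k₄⟩⟩⟩
  show mega p α θ c₁ c₂ c₃ c₄ (1 - ((k₁ : ℤ) + k₂ - k₃ - k₄) - n, ((k₁, k₂), (k₃, k₄)))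
      = p ^ θ * mega p α (-θ) (c₁ - θ) (c₂ - θ) (c₃ + θ) (c₄ + θ) (n, ((k₁, k₂), (k₃, k₄)))
  simp only [mega]
  apply rpow_shuffle hp0 rfl
  push_cast
  ring

lemma rpow_merge5 {p : ℝ} (hp0 : 0 < p) (a b c d e : ℝ) :
    p ^ a * p ^ b * p ^ c * p ^ d * p ^ e = p ^ (a + b + c + d + e) := by
  rw [Real.rpow_add hp0 (a + b + c + d) e, Real.rpow_add hp0 (a + b + c) d,
    Real.rpow_add hp0 (a + b) c, Real.rpow_add hp0 a b]

lemma mega_summable (hp0 : 0 < p) (hp1 : p < 1) (hα : 0 < α) (hα1 : α < 1)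
    (θ c₁ c₂ c₃ c₄ : ℝ) : Summable (mega p α θ c₁ c₂ c₃ c₄) := by
  have hcq0 : 0 < α * (1 - α) / 4 := by nlinarith
  set cq := α * (1 - α) / 4 with hcq
  set B : ℝ := (|θ - α| + 1) ^ 2 / (4 * cq) + ((|c₁ - 1/2| + 1) ^ 2 / (4 * cq)
    + (|c₂ - 1/2| + 1) ^ 2 / (4 * cq) + (|c₃ - 1/2| + 1) ^ 2 / (4 * cq)
    + (|c₄ - 1/2| + 1) ^ 2 / (4 * cq)) with hB
  have hDi : (0 : ℝ) < (Dq p)⁻¹ := inv_pos.2 (Dq_pos p)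
  have key : ∀ x : ℤ × ((ℕ × ℕ) × (ℕ × ℕ)), |mega p α θ c₁ c₂ c₃ c₄ x| ≤
      ((Dq p)⁻¹ ^ 4 * p ^ (-B)) *
        (p ^ x.1.natAbs * ((p ^ x.2.1.1 * p ^ x.2.1.2) * (p ^ x.2.2.1 * p ^ x.2.2.2))) := by
    rintro ⟨n, ⟨⟨k₁, k₂⟩, ⟨k₃, k₄⟩⟩⟩
    have he : ∀ j : ℕ, |eul p j| ≤ (Dq p)⁻¹ * p ^ ((((j : ℝ)) ^ 2 - j) / 2) := fun j => by
      rw [← prod_q_pow_eq hp0 hp1]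
      exact abs_eul_le hp0 hp1 j
    simp only [mega]
    rw [abs_mul, abs_mul, abs_mul, abs_mul, abs_of_pos (Real.rpow_pos_of_pos hp0 _)]
    have hna : |(n : ℝ)| = ((n.natAbs : ℕ) : ℝ) := by
      rw [Nat.cast_natAbs, Int.cast_abs]
    set E := (c₁ + α * (n : ℝ)) * (k₁ : ℝ) + (c₂ + α * (n : ℝ)) * (k₂ : ℝ)
        + (c₃ - α * (n : ℝ)) * (k₃ : ℝ) + (c₄ - α * (n : ℝ)) * (k₄ : ℝ)
        + α * (n : ℝ) * ((n : ℝ) - 1) + θ * (n : ℝ) with hE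
    calc |eul p k₁| * |eul p k₂| * |eul p k₃| * |eul p k₄| * p ^ E
        ≤ ((Dq p)⁻¹ * p ^ ((((k₁ : ℝ)) ^ 2 - k₁) / 2)) * ((Dq p)⁻¹ * p ^ ((((k₂ : ℝ)) ^ 2 - k₂) / 2))
          * ((Dq p)⁻¹ * p ^ ((((k₃ : ℝ)) ^ 2 - k₃) / 2)) * ((Dq p)⁻¹ * p ^ ((((k₄ : ℝ)) ^ 2 - k₄) / 2))
          * p ^ E := by
          gcongr <;> exact he _
      _ = (Dq p)⁻¹ ^ 4 * (p ^ ((((k₁ : ℝ)) ^ 2 - k₁) / 2) * p ^ ((((k₂ : ℝ)) ^ 2 - k₂) / 2)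
            * p ^ ((((k₃ : ℝ)) ^ 2 - k₃) / 2) * p ^ ((((k₄ : ℝ)) ^ 2 - k₄) / 2) * p ^ E) := by
          ring
      _ = (Dq p)⁻¹ ^ 4 * p ^ (((((k₁ : ℝ)) ^ 2 - k₁) / 2 + (((k₂ : ℝ)) ^ 2 - k₂) / 2
            + (((k₃ : ℝ)) ^ 2 - k₃) / 2 + (((k₄ : ℝ)) ^ 2 - k₄) / 2 + E)) := by
          rw [rpow_merge5 hp0]
      _ ≤ (Dq p)⁻¹ ^ 4 * p ^ (-B + |(n : ℝ)| + (k₁ : ℝ) + (k₂ : ℝ) + (k₃ : ℝ) + (k₄ : ℝ)) := by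
          apply mul_le_mul_of_nonneg_left _ (by positivity)
          apply Real.rpow_le_rpow_of_exponent_ge hp0 hp1.le
          rw [hE, hB]
          have hquad := quad_main (x := (n : ℝ)) (k₁ := (k₁ : ℝ)) (k₂ := (k₂ : ℝ))
            (k₃ := (k₃ : ℝ)) (k₄ := (k₄ : ℝ)) hα hα1
            (Nat.cast_nonneg _) (Nat.cast_nonneg _) (Nat.cast_nonneg _) (Nat.cast_nonneg _)
          rw [← hcq] at hquad
          have hl0 := lin_quad_abs (c := cq) (lam := θ - α) (t := (n : ℝ)) hcq0
          have hl1 := lin_quad (c := cq) (lam := c₁ - 1/2) (t := (k₁ : ℝ)) hcq0 (Nat.cast_nonneg _)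
          have hl2 := lin_quad (c := cq) (lam := c₂ - 1/2) (t := (k₂ : ℝ)) hcq0 (Nat.cast_nonneg _)
          have hl3 := lin_quad (c := cq) (lam := c₃ - 1/2) (t := (k₃ : ℝ)) hcq0 (Nat.cast_nonneg _)
          have hl4 := lin_quad (c := cq) (lam := c₄ - 1/2) (t := (k₄ : ℝ)) hcq0 (Nat.cast_nonneg _)
          linarith [hquad, hl0, hl1, hl2, hl3, hl4]
      _ = ((Dq p)⁻¹ ^ 4 * p ^ (-B)) * (p ^ n.natAbs * ((p ^ k₁ * p ^ k₂) * (p ^ k₃ * p ^ k₄))) := by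
          rw [Real.rpow_add hp0, Real.rpow_add hp0, Real.rpow_add hp0, Real.rpow_add hp0,
            Real.rpow_add hp0, hna]
          rw [Real.rpow_natCast, Real.rpow_natCast, Real.rpow_natCast, Real.rpow_natCast,
            Real.rpow_natCast]
          ring
  apply Summable.of_abs
  apply Summable.of_nonneg_of_le (fun x => abs_nonneg _) key
  apply Summable.mul_left
  have s1 : Summable (fun k : ℕ => p ^ k) := summable_geometric_of_lt_one hp0.le hp1
  have s2 : Summable (fun ab : ℕ × ℕ => p ^ ab.1 * p ^ ab.2) :=
    s1.mul_of_nonneg s1 (fun k => (pow_pos hp0 k).le) (fun k => (pow_pos hp0 k).le)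
  have s4 : Summable (fun x : (ℕ × ℕ) × (ℕ × ℕ) =>
      (p ^ x.1.1 * p ^ x.1.2) * (p ^ x.2.1 * p ^ x.2.2)) :=
    s2.mul_of_nonneg s2 (fun k => by positivity) (fun k => by positivity)
  have sZ : Summable (fun n : ℤ => p ^ n.natAbs) := by
    apply Summable.of_nat_of_neg
    · exact s1.congr fun n => by simp
    · exact s1.congr fun n => by simp
  exact sZ.mul_of_nonneg s4 (fun n => (pow_pos hp0 _).le) (fun k => by positivity)

lemma poch_prod_eq (hp0 : 0 < p) (hp1 : p < 1) (d₁ d₂ d₃ d₄ t : ℝ) :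
    qPochR (p ^ d₁) p * qPochR (p ^ d₂) p * qPochR (p ^ d₃) p * qPochR (p ^ d₄) p * p ^ t
      = ∑' k : (ℕ × ℕ) × (ℕ × ℕ),
          eul p k.1.1 * eul p k.1.2 * eul p k.2.1 * eul p k.2.2 *
            p ^ (d₁ * k.1.1 + d₂ * k.1.2 + d₃ * k.2.1 + d₄ * k.2.2 + t) := by
  have hyk : ∀ (d : ℝ) (k : ℕ), (p ^ d) ^ k = p ^ (d * k) := fun d k => by
    rw [← Real.rpow_natCast (p ^ d) k, ← Real.rpow_mul hp0.le]
  have hpoch : ∀ d : ℝ, qPochR (p ^ d) p = ∑' j, eul p j * (p ^ d) ^ j := fun d =>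
    qPochR_eq_eulS hp0 hp1 (p ^ d)
  have hn : ∀ d : ℝ, Summable fun j => ‖eul p j * (p ^ d) ^ j‖ := fun d =>
    summable_eul_norm hp0 hp1 (p ^ d)
  have h12 : qPochR (p ^ d₁) p * qPochR (p ^ d₂) p
      = ∑' ab : ℕ × ℕ, (eul p ab.1 * (p ^ d₁) ^ ab.1) * (eul p ab.2 * (p ^ d₂) ^ ab.2) := by
    rw [hpoch d₁, hpoch d₂]
    exact tsum_mul_tsum_of_summable_norm (hn d₁) (hn d₂)
  have h34 : qPochR (p ^ d₃) p * qPochR (p ^ d₄) p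
      = ∑' ab : ℕ × ℕ, (eul p ab.1 * (p ^ d₃) ^ ab.1) * (eul p ab.2 * (p ^ d₄) ^ ab.2) := by
    rw [hpoch d₃, hpoch d₄]
    exact tsum_mul_tsum_of_summable_norm (hn d₃) (hn d₄)
  have hn12 : Summable fun ab : ℕ × ℕ =>
      ‖(eul p ab.1 * (p ^ d₁) ^ ab.1) * (eul p ab.2 * (p ^ d₂) ^ ab.2)‖ :=
    (hn d₁).mul_norm (hn d₂)
  have hn34 : Summable fun ab : ℕ × ℕ =>
      ‖(eul p ab.1 * (p ^ d₃) ^ ab.1) * (eul p ab.2 * (p ^ d₄) ^ ab.2)‖ :=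
    (hn d₃).mul_norm (hn d₄)
  have h1234 : (qPochR (p ^ d₁) p * qPochR (p ^ d₂) p) * (qPochR (p ^ d₃) p * qPochR (p ^ d₄) p)
      = ∑' k : (ℕ × ℕ) × (ℕ × ℕ),
          ((eul p k.1.1 * (p ^ d₁) ^ k.1.1) * (eul p k.1.2 * (p ^ d₂) ^ k.1.2))
          * ((eul p k.2.1 * (p ^ d₃) ^ k.2.1) * (eul p k.2.2 * (p ^ d₄) ^ k.2.2)) := by
    rw [h12, h34]
    exact tsum_mul_tsum_of_summable_norm hn12 hn34
  calc qPochR (p ^ d₁) p * qPochR (p ^ d₂) p * qPochR (p ^ d₃) p * qPochR (p ^ d₄) p * p ^ t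
      = ((qPochR (p ^ d₁) p * qPochR (p ^ d₂) p) * (qPochR (p ^ d₃) p * qPochR (p ^ d₄) p)) * p ^ t := by
        ring
    _ = (∑' k : (ℕ × ℕ) × (ℕ × ℕ),
          ((eul p k.1.1 * (p ^ d₁) ^ k.1.1) * (eul p k.1.2 * (p ^ d₂) ^ k.1.2))
          * ((eul p k.2.1 * (p ^ d₃) ^ k.2.1) * (eul p k.2.2 * (p ^ d₄) ^ k.2.2))) * p ^ t := by
        rw [h1234]
    _ = ∑' k : (ℕ × ℕ) × (ℕ × ℕ),
          ((eul p k.1.1 * (p ^ d₁) ^ k.1.1) * (eul p k.1.2 * (p ^ d₂) ^ k.1.2))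
          * ((eul p k.2.1 * (p ^ d₃) ^ k.2.1) * (eul p k.2.2 * (p ^ d₄) ^ k.2.2)) * p ^ t := by
        rw [tsum_mul_right]
    _ = ∑' k : (ℕ × ℕ) × (ℕ × ℕ),
          eul p k.1.1 * eul p k.1.2 * eul p k.2.1 * eul p k.2.2 *
            p ^ (d₁ * k.1.1 + d₂ * k.1.2 + d₃ * k.2.1 + d₄ * k.2.2 + t) := by
        apply tsum_congr
        rintro ⟨⟨k₁, k₂⟩, ⟨k₃, k₄⟩⟩
        simp only
        rw [hyk, hyk, hyk, hyk]
        rw [Real.rpow_add hp0, Real.rpow_add hp0, Real.rpow_add hp0, Real.rpow_add hp0]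
        ring

lemma qBinomR_eq (hp0 : 0 < p) (hp1 : p < 1) (hC : 0 < qPochR p p) (a b : ℝ) :
    qBinomR p a b = qGammaR p (a + 1) * (1 - p) ^ (a : ℝ) / (qPochR p p) ^ 2 *
      (qPochR (p ^ (b + 1)) p * qPochR (p ^ (a - b + 1)) p) := by
  have h1p : (0 : ℝ) < 1 - p := by linarith
  by_cases hP1 : qPochR (p ^ (b + 1)) p = 0
  · simp [qBinomR, qGammaR, hP1]
  by_cases hP2 : qPochR (p ^ (a - b + 1)) p = 0
  · simp [qBinomR, qGammaR, hP2]
  by_cases hPa : qPochR (p ^ (a + 1)) p = 0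
  · simp [qBinomR, qGammaR, hPa]
  rw [qBinomR, qGammaR, qGammaR, qGammaR]
  rw [show (1 : ℝ) - (b + 1) = -b by ring, show (1 : ℝ) - (a - b + 1) = -(a - b) by ring]
  rw [Real.rpow_neg h1p.le b, Real.rpow_neg h1p.le (a - b)]
  have hrb : (1 - p) ^ (b : ℝ) ≠ 0 := (Real.rpow_pos_of_pos h1p b).ne'
  have hrab : (1 - p) ^ (a - b : ℝ) ≠ 0 := (Real.rpow_pos_of_pos h1p (a - b)).ne'
  have hra : (1 - p) ^ (a : ℝ) = (1 - p) ^ (b : ℝ) * (1 - p) ^ (a - b : ℝ) := by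
    rw [← Real.rpow_add h1p]
    congr 1
    ring
  rw [hra]
  field_simp

end assembly
theorem stmt_17 (p α : ℝ) (hp : 0 < p) (hp1 : p < 1) (hα : 0 < α) (hα1 : α < 1)
    (a₁ a₂ b₁ b₂ θ : ℝ) :
    ∑' n : ℤ,
      qBinomR p a₁ (b₁ + α * (n : ℝ)) * qBinomR p a₂ (b₂ + α * (n : ℝ)) *
        p ^ (α * (n : ℝ) * ((n : ℝ) - 1) + θ * (n : ℝ))
    = p ^ θ *
        ∑' n : ℤ,
          qBinomR p a₁ (b₁ - θ + α * (n : ℝ)) * qBinomR p a₂ (b₂ - θ + α * (n : ℝ)) *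
            p ^ (α * (n : ℝ) * ((n : ℝ) - 1) - θ * (n : ℝ)) := by
  have hC : 0 < qPochR p p := qPochR_qq_pos hp hp1
  set K : ℝ := qGammaR p (a₁ + 1) * (1 - p) ^ (a₁ : ℝ) / (qPochR p p) ^ 2 *
      (qGammaR p (a₂ + 1) * (1 - p) ^ (a₂ : ℝ) / (qPochR p p) ^ 2) with hK
  have hterm : ∀ (θ' b₁' b₂' : ℝ) (n : ℤ),
      qBinomR p a₁ (b₁' + α * (n : ℝ)) * qBinomR p a₂ (b₂' + α * (n : ℝ)) *
          p ^ (α * (n : ℝ) * ((n : ℝ) - 1) + θ' * (n : ℝ))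
      = K * ∑' k : (ℕ × ℕ) × (ℕ × ℕ),
          mega (p := p) (α := α) θ' (b₁' + 1) (b₂' + 1) (a₁ - b₁' + 1) (a₂ - b₂' + 1) (n, k) := by
    intro θ' b₁' b₂' n
    rw [qBinomR_eq hp hp1 hC a₁ (b₁' + α * (n : ℝ)), qBinomR_eq hp hp1 hC a₂ (b₂' + α * (n : ℝ))]
    trans (K * (qPochR (p ^ (b₁' + α * (n : ℝ) + 1)) p * qPochR (p ^ (b₂' + α * (n : ℝ) + 1)) p
      * qPochR (p ^ (a₁ - (b₁' + α * (n : ℝ)) + 1)) p * qPochR (p ^ (a₂ - (b₂' + α * (n : ℝ)) + 1)) p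
      * p ^ (α * (n : ℝ) * ((n : ℝ) - 1) + θ' * (n : ℝ))))
    · rw [hK]; ring
    · rw [show qPochR (p ^ (b₁' + α * (n : ℝ) + 1)) p * qPochR (p ^ (b₂' + α * (n : ℝ) + 1)) p
          * qPochR (p ^ (a₁ - (b₁' + α * (n : ℝ)) + 1)) p
          * qPochR (p ^ (a₂ - (b₂' + α * (n : ℝ)) + 1)) p
          * p ^ (α * (n : ℝ) * ((n : ℝ) - 1) + θ' * (n : ℝ))
          = qPochR (p ^ (b₁' + α * (n : ℝ) + 1)) p * qPochR (p ^ (b₂' + α * (n : ℝ) + 1)) p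
          * qPochR (p ^ (a₁ - (b₁' + α * (n : ℝ)) + 1)) p
          * qPochR (p ^ (a₂ - (b₂' + α * (n : ℝ)) + 1)) p
          * p ^ (α * (n : ℝ) * ((n : ℝ) - 1) + θ' * (n : ℝ)) from rfl]
      rw [poch_prod_eq hp hp1 (b₁' + α * (n : ℝ) + 1) (b₂' + α * (n : ℝ) + 1)
        (a₁ - (b₁' + α * (n : ℝ)) + 1) (a₂ - (b₂' + α * (n : ℝ)) + 1)
        (α * (n : ℝ) * ((n : ℝ) - 1) + θ' * (n : ℝ))]
      congr 1
      apply tsum_congr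
      rintro ⟨⟨k₁, k₂⟩, ⟨k₃, k₄⟩⟩
      simp only [mega]
      congr 1
      push_cast
      ring
  have hLHS : (∑' n : ℤ,
      qBinomR p a₁ (b₁ + α * (n : ℝ)) * qBinomR p a₂ (b₂ + α * (n : ℝ)) *
        p ^ (α * (n : ℝ) * ((n : ℝ) - 1) + θ * (n : ℝ)))
      = K * ∑' x, mega (p := p) (α := α) θ (b₁ + 1) (b₂ + 1) (a₁ - b₁ + 1) (a₂ - b₂ + 1) x := by
    calc (∑' n : ℤ, qBinomR p a₁ (b₁ + α * (n : ℝ)) * qBinomR p a₂ (b₂ + α * (n : ℝ)) *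
            p ^ (α * (n : ℝ) * ((n : ℝ) - 1) + θ * (n : ℝ)))
        = ∑' n : ℤ, K * ∑' k : (ℕ × ℕ) × (ℕ × ℕ),
            mega (p := p) (α := α) θ (b₁ + 1) (b₂ + 1) (a₁ - b₁ + 1) (a₂ - b₂ + 1) (n, k) :=
          tsum_congr fun n => hterm θ b₁ b₂ n
      _ = K * ∑' n : ℤ, ∑' k : (ℕ × ℕ) × (ℕ × ℕ),
            mega (p := p) (α := α) θ (b₁ + 1) (b₂ + 1) (a₁ - b₁ + 1) (a₂ - b₂ + 1) (n, k) :=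
          tsum_mul_left
      _ = K * ∑' x, mega (p := p) (α := α) θ (b₁ + 1) (b₂ + 1) (a₁ - b₁ + 1) (a₂ - b₂ + 1) x := by
          rw [← Summable.tsum_prod' (mega_summable hp hp1 hα hα1 θ (b₁ + 1) (b₂ + 1) (a₁ - b₁ + 1) (a₂ - b₂ + 1))
            (fun n => (mega_summable hp hp1 hα hα1 θ (b₁ + 1) (b₂ + 1) (a₁ - b₁ + 1)
              (a₂ - b₂ + 1)).prod_factor n)]
  have hRHS : (∑' n : ℤ,
      qBinomR p a₁ (b₁ - θ + α * (n : ℝ)) * qBinomR p a₂ (b₂ - θ + α * (n : ℝ)) *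
        p ^ (α * (n : ℝ) * ((n : ℝ) - 1) - θ * (n : ℝ)))
      = K * ∑' x, mega (p := p) (α := α) (-θ) (b₁ - θ + 1) (b₂ - θ + 1) (a₁ - (b₁ - θ) + 1)
          (a₂ - (b₂ - θ) + 1) x := by
    calc (∑' n : ℤ, qBinomR p a₁ (b₁ - θ + α * (n : ℝ)) * qBinomR p a₂ (b₂ - θ + α * (n : ℝ)) *
            p ^ (α * (n : ℝ) * ((n : ℝ) - 1) - θ * (n : ℝ)))
        = ∑' n : ℤ, K * ∑' k : (ℕ × ℕ) × (ℕ × ℕ),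
            mega (p := p) (α := α) (-θ) (b₁ - θ + 1) (b₂ - θ + 1) (a₁ - (b₁ - θ) + 1)
              (a₂ - (b₂ - θ) + 1) (n, k) := by
          apply tsum_congr
          intro n
          rw [show α * (n : ℝ) * ((n : ℝ) - 1) - θ * (n : ℝ)
            = α * (n : ℝ) * ((n : ℝ) - 1) + (-θ) * (n : ℝ) by ring]
          exact hterm (-θ) (b₁ - θ) (b₂ - θ) n
      _ = K * ∑' n : ℤ, ∑' k : (ℕ × ℕ) × (ℕ × ℕ),
            mega (p := p) (α := α) (-θ) (b₁ - θ + 1) (b₂ - θ + 1) (a₁ - (b₁ - θ) + 1)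
              (a₂ - (b₂ - θ) + 1) (n, k) := tsum_mul_left
      _ = K * ∑' x, mega (p := p) (α := α) (-θ) (b₁ - θ + 1) (b₂ - θ + 1) (a₁ - (b₁ - θ) + 1)
            (a₂ - (b₂ - θ) + 1) x := by
          rw [← Summable.tsum_prod' (mega_summable hp hp1 hα hα1 (-θ) (b₁ - θ + 1) (b₂ - θ + 1)
              (a₁ - (b₁ - θ) + 1) (a₂ - (b₂ - θ) + 1))
            (fun n => (mega_summable hp hp1 hα hα1 (-θ) (b₁ - θ + 1) (b₂ - θ + 1)
              (a₁ - (b₁ - θ) + 1) (a₂ - (b₂ - θ) + 1)).prod_factor n)]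
  rw [hLHS, hRHS]
  rw [mega_shift (α := α) hp θ (b₁ + 1) (b₂ + 1) (a₁ - b₁ + 1) (a₂ - b₂ + 1)]
  rw [show (b₁ + 1) - θ = b₁ - θ + 1 by ring, show (b₂ + 1) - θ = b₂ - θ + 1 by ring,
    show (a₁ - b₁ + 1) + θ = a₁ - (b₁ - θ) + 1 by ring,
    show (a₂ - b₂ + 1) + θ = a₂ - (b₂ - θ) + 1 by ring]
  ring
end
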